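/- arXiv:0906.3499 — 6 statements merged into one kernel-verified Lean document; each statement's English description precedes it below -/
import Mathlib

section
/- Suppose the linear operator 𝒜 : ℝ^{m×n} → ℝ^p satisfies the restricted isometry property with constant δ_r(𝒜), and let Ψ be an orthonormal set of matrices in ℝ^{m×n} such that rank(P_Ψ X) ≤ r for all X ∈ ℝ^{m×n}, where P_Ψ denotes orthogonal projection onto span(Ψ). Then for all b ∈ ℝ^p, ‖P_Ψ 𝒜* b‖_F ≤ √(1+δ_r(𝒜)) ‖b‖₂. -/
/-!
With `Y = P_Ψ 𝒜* b`, self-adjointness and idempotence of `P_Ψ` give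
`‖Y‖_F² = ⟨𝒜* b, Y⟩ = ⟨b, 𝒜 Y⟩ ≤ ‖b‖₂ ‖𝒜 Y‖₂`, and since `Y` has rank at most `r`, the upper
RIP bound gives `‖𝒜 Y‖₂ ≤ √(1 + δ) ‖Y‖_F`. Dividing by `‖Y‖_F` finishes the proof.
-/

open scoped BigOperators
open Matrix

noncomputable section

/-- Frobenius (trace) inner product of real matrices. -/
def frobInner {m n : ℕ} (X Y : Matrix (Fin m) (Fin n) ℝ) : ℝ :=
  ∑ i, ∑ j, X i j * Y i j

/-- Frobenius norm of a real matrix. -/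
def frobNorm {m n : ℕ} (X : Matrix (Fin m) (Fin n) ℝ) : ℝ :=
  Real.sqrt (frobInner X X)

/-- Euclidean norm of a vector in ℝ^p. -/
def vecNorm {p : ℕ} (b : Fin p → ℝ) : ℝ :=
  Real.sqrt (∑ i, b i ^ 2)

/-- A finite set of matrices is orthonormal w.r.t. the trace inner product. -/
def IsOrthonormalSet {m n : ℕ} (Ψ : Finset (Matrix (Fin m) (Fin n) ℝ)) : Prop :=
  (∀ ψ ∈ Ψ, frobInner ψ ψ = 1) ∧ ∀ ψ ∈ Ψ, ∀ φ ∈ Ψ, ψ ≠ φ → frobInner ψ φ = 0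

/-- Orthogonal projection onto the span of an orthonormal family Ψ. -/
def projSpan {m n : ℕ} (Ψ : Finset (Matrix (Fin m) (Fin n) ℝ))
    (X : Matrix (Fin m) (Fin n) ℝ) : Matrix (Fin m) (Fin n) ℝ :=
  ∑ ψ ∈ Ψ, frobInner ψ X • ψ

section Frobenius

variable {m n : ℕ}

lemma frobInner_comm (X Y : Matrix (Fin m) (Fin n) ℝ) : frobInner X Y = frobInner Y X := by
  simp only [frobInner, mul_comm]

lemma frobInner_self_nonneg (X : Matrix (Fin m) (Fin n) ℝ) : 0 ≤ frobInner X X :=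
  Finset.sum_nonneg fun _ _ => Finset.sum_nonneg fun _ _ => mul_self_nonneg _

lemma frobNorm_nonneg (X : Matrix (Fin m) (Fin n) ℝ) : 0 ≤ frobNorm X :=
  Real.sqrt_nonneg _

lemma frobNorm_sq (X : Matrix (Fin m) (Fin n) ℝ) : frobNorm X ^ 2 = frobInner X X :=
  Real.sq_sqrt (frobInner_self_nonneg X)

lemma frobInner_sum_smul_right {ι : Type*} (s : Finset ι) (c : ι → ℝ)
    (X : Matrix (Fin m) (Fin n) ℝ) (f : ι → Matrix (Fin m) (Fin n) ℝ) :
    frobInner X (∑ t ∈ s, c t • f t) = ∑ t ∈ s, c t * frobInner X (f t) := by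
  simp only [frobInner, Matrix.sum_apply, Matrix.smul_apply, smul_eq_mul, Finset.mul_sum]
  rw [Finset.sum_comm (γ := ι)]
  refine Finset.sum_congr rfl fun t _ => ?_
  rw [Finset.sum_comm]
  exact Finset.sum_congr rfl fun j _ => Finset.sum_congr rfl fun i _ => by ring

lemma frobInner_projSpan_right (Ψ : Finset (Matrix (Fin m) (Fin n) ℝ))
    (X Y : Matrix (Fin m) (Fin n) ℝ) :
    frobInner Y (projSpan Ψ X) = ∑ ψ ∈ Ψ, frobInner ψ X * frobInner Y ψ :=
  frobInner_sum_smul_right Ψ _ Y id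

end Frobenius

namespace IsOrthonormalSet

variable {m n : ℕ} {Ψ : Finset (Matrix (Fin m) (Fin n) ℝ)}

lemma frobInner_projSpan (hΨ : IsOrthonormalSet Ψ) {ψ : Matrix (Fin m) (Fin n) ℝ} (hψ : ψ ∈ Ψ)
    (X : Matrix (Fin m) (Fin n) ℝ) : frobInner ψ (projSpan Ψ X) = frobInner ψ X := by
  rw [frobInner_projSpan_right, Finset.sum_eq_single_of_mem ψ hψ, hΨ.1 ψ hψ, mul_one]
  intro φ hφ hne
  rw [hΨ.2 ψ hψ φ hφ hne.symm, mul_zero]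

lemma frobNorm_projSpan_sq (hΨ : IsOrthonormalSet Ψ) (X : Matrix (Fin m) (Fin n) ℝ) :
    frobNorm (projSpan Ψ X) ^ 2 = frobInner X (projSpan Ψ X) := by
  rw [frobNorm_sq, frobInner_projSpan_right, frobInner_projSpan_right]
  refine Finset.sum_congr rfl fun ψ hψ => ?_
  rw [frobInner_comm _ ψ, hΨ.frobInner_projSpan hψ, frobInner_comm X ψ]

end IsOrthonormalSet

lemma le_sqrt_mul_of_sq_le_mul_sq {a c k : ℝ} (ha : 0 ≤ a) (hc : 0 ≤ c) (h : a ^ 2 ≤ k * c ^ 2) :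
    a ≤ Real.sqrt k * c := by
  rw [← Real.sqrt_sq ha, ← Real.sqrt_sq hc, ← Real.sqrt_mul' k (sq_nonneg c)]
  exact Real.sqrt_le_sqrt h

theorem proj_adjoint_bound_general {m n p r : ℕ}
    (A : Matrix (Fin m) (Fin n) ℝ →ₗ[ℝ] (Fin p → ℝ))
    (Aadj : (Fin p → ℝ) →ₗ[ℝ] Matrix (Fin m) (Fin n) ℝ)
    (hadj : ∀ (X : Matrix (Fin m) (Fin n) ℝ) (c : Fin p → ℝ),
      ∑ i, A X i * c i = frobInner (Aadj c) X)
    (δ : ℝ)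
    (hRIP : ∀ X : Matrix (Fin m) (Fin n) ℝ, X.rank ≤ r →
      (1 - δ) * frobNorm X ^ 2 ≤ vecNorm (A X) ^ 2 ∧
        vecNorm (A X) ^ 2 ≤ (1 + δ) * frobNorm X ^ 2)
    (Ψ : Finset (Matrix (Fin m) (Fin n) ℝ)) (hΨ : IsOrthonormalSet Ψ)
    (hrank : ∀ X : Matrix (Fin m) (Fin n) ℝ, (projSpan Ψ X).rank ≤ r) :
    ∀ b : Fin p → ℝ,
      frobNorm (projSpan Ψ (Aadj b)) ≤ Real.sqrt (1 + δ) * vecNorm b := by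
  intro b
  set Y := projSpan Ψ (Aadj b)
  have hAY : vecNorm (A Y) ≤ Real.sqrt (1 + δ) * frobNorm Y :=
    le_sqrt_mul_of_sq_le_mul_sq (Real.sqrt_nonneg _) (frobNorm_nonneg Y)
      (hRIP Y (hrank (Aadj b))).2
  have hY : frobNorm Y * frobNorm Y ≤ Real.sqrt (1 + δ) * vecNorm b * frobNorm Y :=
    calc frobNorm Y * frobNorm Y = ∑ i, A Y i * b i := by
          rw [← sq, hΨ.frobNorm_projSpan_sq, hadj]
      _ ≤ vecNorm (A Y) * vecNorm b := Real.sum_mul_le_sqrt_mul_sqrt _ _ _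
      _ ≤ Real.sqrt (1 + δ) * frobNorm Y * vecNorm b :=
          mul_le_mul_of_nonneg_right hAY (Real.sqrt_nonneg _)
      _ = Real.sqrt (1 + δ) * vecNorm b * frobNorm Y := by ring
  rcases (frobNorm_nonneg Y).eq_or_lt with hzero | hpos
  · rw [← hzero]
    exact mul_nonneg (Real.sqrt_nonneg _) (Real.sqrt_nonneg _)
  · exact le_of_mul_le_mul_right hY hpos

/-- Proposition 2.1, inequality (2.3): ‖P_Ψ 𝒜* b‖_F ≤ √(1+δ_r) ‖b‖₂. -/
theorem proj_adjoint_bound {m n p r : ℕ}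
    (A : Matrix (Fin m) (Fin n) ℝ →ₗ[ℝ] (Fin p → ℝ))
    (Aadj : (Fin p → ℝ) →ₗ[ℝ] Matrix (Fin m) (Fin n) ℝ)
    (hadj : ∀ (X : Matrix (Fin m) (Fin n) ℝ) (c : Fin p → ℝ),
      ∑ i, A X i * c i = frobInner (Aadj c) X)
    (δ : ℝ) (hδ : 0 ≤ δ)
    (hRIP : ∀ X : Matrix (Fin m) (Fin n) ℝ, X.rank ≤ r →
      (1 - δ) * frobNorm X ^ 2 ≤ vecNorm (A X) ^ 2 ∧
        vecNorm (A X) ^ 2 ≤ (1 + δ) * frobNorm X ^ 2)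
    (Ψ : Finset (Matrix (Fin m) (Fin n) ℝ)) (hΨ : IsOrthonormalSet Ψ)
    (hrank : ∀ X : Matrix (Fin m) (Fin n) ℝ, (projSpan Ψ X).rank ≤ r) :
    ∀ b : Fin p → ℝ,
      frobNorm (projSpan Ψ (Aadj b)) ≤ Real.sqrt (1 + δ) * vecNorm b :=
  proj_adjoint_bound_general A Aadj hadj δ hRIP Ψ hΨ hrank
end
end

section
/- Suppose 𝒜 : ℝ^{m×n} → ℝ^p satisfies the RIP with constant δ_r(𝒜), and Ψ is an orthonormal set of matrices such that rank(P_Ψ X) ≤ r for all X. Then for all X ∈ ℝ^{m×n}: (1−δ_r(𝒜))‖P_Ψ X‖_F ≤ ‖P_Ψ 𝒜* 𝒜 P_Ψ X‖_F ≤ (1+δ_r(𝒜))‖P_Ψ X‖_F. -/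
open scoped BigOperators
open Matrix

noncomputable section

/-!
With `Y = P_Ψ X` and `W = P_Ψ 𝒜* 𝒜 Y`, both `Y` and `W` lie in the range of the self-adjoint
idempotent `P_Ψ`, so `⟨W, Z⟩ = ⟨𝒜 Z, 𝒜 Y⟩` for `Z ∈ {Y, W}`. Taking `Z = Y` gives
`(1 - δ)‖Y‖² ≤ ‖𝒜 Y‖² = ⟨W, Y⟩ ≤ ‖W‖ ‖Y‖`; taking `Z = W` gives
`‖W‖² ≤ ‖𝒜 W‖ ‖𝒜 Y‖ ≤ (1 + δ)‖W‖ ‖Y‖`, both RIP bounds applying because `rank (P_Ψ ·) ≤ r`.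
-/

lemma mul_le_of_mul_sq_le_mul {c y w : ℝ} (hy : 0 ≤ y) (hw : 0 ≤ w)
    (h : c * y ^ 2 ≤ w * y) : c * y ≤ w := by
  rcases hy.eq_or_lt with rfl | hy
  · simpa using hw
  · exact le_of_mul_le_mul_right (by nlinarith) hy

lemma le_mul_of_sq_le_mul_mul {c y w : ℝ} (hw : 0 ≤ w) (hcy : 0 ≤ c * y)
    (h : w ^ 2 ≤ c * (w * y)) : w ≤ c * y := by
  rcases hw.eq_or_lt with rfl | hw
  · exact hcy
  · exact le_of_mul_le_mul_right (by nlinarith) hw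

lemma mul_le_mul_of_sq_le_mul_sq {a b c x y : ℝ} (hc : 0 ≤ c) (ha : 0 ≤ a) (hb : 0 ≤ b)
    (hx : 0 ≤ x) (hy : 0 ≤ y) (hax : a ^ 2 ≤ c * x ^ 2) (hby : b ^ 2 ≤ c * y ^ 2) :
    a * b ≤ c * (x * y) := by
  have hsq : (a * b) ^ 2 ≤ (c * (x * y)) ^ 2 :=
    calc (a * b) ^ 2 = a ^ 2 * b ^ 2 := by ring
      _ ≤ (c * x ^ 2) * (c * y ^ 2) := mul_le_mul hax hby (sq_nonneg b) (by positivity)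
      _ = (c * (x * y)) ^ 2 := by ring
  exact (pow_le_pow_iff_left₀ (by positivity) (by positivity) two_ne_zero).1 hsq

section Frobenius

variable {m n : ℕ}

lemma frobInner_sum_smul_left {ι : Type*} (s : Finset ι) (a : ι → ℝ)
    (f : ι → Matrix (Fin m) (Fin n) ℝ) (W : Matrix (Fin m) (Fin n) ℝ) :
    frobInner (∑ k ∈ s, a k • f k) W = ∑ k ∈ s, a k * frobInner (f k) W := by
  simp only [frobInner, Matrix.sum_apply, Matrix.smul_apply, smul_eq_mul, Finset.sum_mul,
    Finset.mul_sum, mul_assoc]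
  exact (Finset.sum_comm.trans (Finset.sum_congr rfl fun _ _ => Finset.sum_comm)).symm

lemma frobInner_eq_sum_prod (X Y : Matrix (Fin m) (Fin n) ℝ) :
    frobInner X Y = ∑ q : Fin m × Fin n, X q.1 q.2 * Y q.1 q.2 :=
  (Fintype.sum_prod_type' fun i j => X i j * Y i j).symm

lemma frobInner_le_frobNorm_mul_frobNorm (X Y : Matrix (Fin m) (Fin n) ℝ) :
    frobInner X Y ≤ frobNorm X * frobNorm Y := by
  simpa only [frobNorm, frobInner_eq_sum_prod, ← sq] using
    Real.sum_mul_le_sqrt_mul_sqrt Finset.univ (fun q : Fin m × Fin n => X q.1 q.2)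
      (fun q => Y q.1 q.2)

end Frobenius

lemma vecNorm_sq {p : ℕ} (b : Fin p → ℝ) : vecNorm b ^ 2 = ∑ i, b i * b i := by
  simp only [vecNorm, ← sq]
  exact Real.sq_sqrt (Finset.sum_nonneg fun _ _ => sq_nonneg _)

lemma vecNorm_nonneg {p : ℕ} (b : Fin p → ℝ) : 0 ≤ vecNorm b := Real.sqrt_nonneg _

lemma sum_mul_le_vecNorm_mul_vecNorm {p : ℕ} (b c : Fin p → ℝ) :
    ∑ i, b i * c i ≤ vecNorm b * vecNorm c :=
  Real.sum_mul_le_sqrt_mul_sqrt _ _ _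

section Projection

variable {m n : ℕ} (Ψ : Finset (Matrix (Fin m) (Fin n) ℝ))

lemma frobInner_projSpan_left (Z W : Matrix (Fin m) (Fin n) ℝ) :
    frobInner (projSpan Ψ Z) W = ∑ ψ ∈ Ψ, frobInner ψ Z * frobInner ψ W :=
  frobInner_sum_smul_left _ _ _ _

lemma frobInner_projSpan_comm (Z W : Matrix (Fin m) (Fin n) ℝ) :
    frobInner (projSpan Ψ Z) W = frobInner Z (projSpan Ψ W) := by
  rw [frobInner_projSpan_left, frobInner_comm Z, frobInner_projSpan_left]
  simp only [mul_comm]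

variable {Ψ}

lemma frobInner_projSpan_of_mem (hΨ : IsOrthonormalSet Ψ) {ψ : Matrix (Fin m) (Fin n) ℝ}
    (hψ : ψ ∈ Ψ) (Z : Matrix (Fin m) (Fin n) ℝ) :
    frobInner ψ (projSpan Ψ Z) = frobInner ψ Z := by
  rw [frobInner_comm, frobInner_projSpan_left, Finset.sum_eq_single_of_mem ψ hψ]
  · rw [frobInner_comm ψ Z, hΨ.1 ψ hψ, mul_one]
  · intro φ hφ hne
    rw [frobInner_comm φ ψ, hΨ.2 ψ hψ φ hφ hne.symm, mul_zero]

lemma projSpan_projSpan (hΨ : IsOrthonormalSet Ψ) (Z : Matrix (Fin m) (Fin n) ℝ) :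
    projSpan Ψ (projSpan Ψ Z) = projSpan Ψ Z :=
  Finset.sum_congr rfl fun _ hψ => by rw [frobInner_projSpan_of_mem hΨ hψ]

end Projection

lemma frobInner_projSpan_adjoint_of_projSpan_eq {m n p : ℕ}
    {A : Matrix (Fin m) (Fin n) ℝ → Fin p → ℝ} {Aadj : (Fin p → ℝ) → Matrix (Fin m) (Fin n) ℝ}
    (hadj : ∀ X c, ∑ i, A X i * c i = frobInner (Aadj c) X)
    (Ψ : Finset (Matrix (Fin m) (Fin n) ℝ)) (Y : Matrix (Fin m) (Fin n) ℝ)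
    {Z : Matrix (Fin m) (Fin n) ℝ} (hZ : projSpan Ψ Z = Z) :
    frobInner (projSpan Ψ (Aadj (A Y))) Z = ∑ i, A Z i * A Y i := by
  rw [frobInner_projSpan_comm, hZ, hadj]

/-- Proposition 2.1, inequality (2.4): the eigenvalue bounds for P_Ψ 𝒜* 𝒜 P_Ψ. -/
theorem proj_normal_bound {m n p r : ℕ}
    (A : Matrix (Fin m) (Fin n) ℝ →ₗ[ℝ] (Fin p → ℝ))
    (Aadj : (Fin p → ℝ) →ₗ[ℝ] Matrix (Fin m) (Fin n) ℝ)
    (hadj : ∀ (X : Matrix (Fin m) (Fin n) ℝ) (c : Fin p → ℝ),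
      ∑ i, A X i * c i = frobInner (Aadj c) X)
    (δ : ℝ) (hδ : 0 ≤ δ)
    (hRIP : ∀ X : Matrix (Fin m) (Fin n) ℝ, X.rank ≤ r →
      (1 - δ) * frobNorm X ^ 2 ≤ vecNorm (A X) ^ 2 ∧
        vecNorm (A X) ^ 2 ≤ (1 + δ) * frobNorm X ^ 2)
    (Ψ : Finset (Matrix (Fin m) (Fin n) ℝ)) (hΨ : IsOrthonormalSet Ψ)
    (hrank : ∀ X : Matrix (Fin m) (Fin n) ℝ, (projSpan Ψ X).rank ≤ r) :
    ∀ X : Matrix (Fin m) (Fin n) ℝ,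
      (1 - δ) * frobNorm (projSpan Ψ X) ≤
          frobNorm (projSpan Ψ (Aadj (A (projSpan Ψ X)))) ∧
        frobNorm (projSpan Ψ (Aadj (A (projSpan Ψ X)))) ≤
          (1 + δ) * frobNorm (projSpan Ψ X) := by
  intro X
  set Y := projSpan Ψ X
  set W := projSpan Ψ (Aadj (A Y))
  have hWY : frobInner W Y = vecNorm (A Y) ^ 2 := by
    rw [vecNorm_sq]
    exact frobInner_projSpan_adjoint_of_projSpan_eq hadj Ψ Y (projSpan_projSpan hΨ X)
  have hWW : frobNorm W ^ 2 ≤ vecNorm (A W) * vecNorm (A Y) := by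
    rw [frobNorm_sq, frobInner_projSpan_adjoint_of_projSpan_eq hadj Ψ Y
      (projSpan_projSpan hΨ _)]
    exact sum_mul_le_vecNorm_mul_vecNorm _ _
  obtain ⟨hY_lower, hY_upper⟩ := hRIP Y (hrank X)
  have hY := frobNorm_nonneg Y
  have hW := frobNorm_nonneg W
  constructor
  · refine mul_le_of_mul_sq_le_mul hY hW ?_
    calc (1 - δ) * frobNorm Y ^ 2 ≤ frobInner W Y := hWY ▸ hY_lower
      _ ≤ frobNorm W * frobNorm Y := frobInner_le_frobNorm_mul_frobNorm W Y
  · refine le_mul_of_sq_le_mul_mul hW (by positivity) ?_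
    exact hWW.trans <| mul_le_mul_of_sq_le_mul_sq (by linarith) (vecNorm_nonneg _)
      (vecNorm_nonneg _) hW hY (hRIP W (hrank _)).2 hY_upper
end
end

section
/- Let X ∈ ℝ^{m×n} (m ≤ n) have singular values σ₁ ≥ σ₂ ≥ ... ≥ σ_m, and fix r ≥ 1. Partition the indices {1,...,m} into consecutive blocks I₀, I₁, ..., I_J of size r (the last possibly smaller), ordered by decreasing singular value. Then Σ_{j=0}^{J} ‖σ|_{I_j}‖₂ ≤ ‖X‖_F + (1/√r) ‖X‖_*, where σ|_{I_j} is the vector of singular values with indices in I_j. -/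
open scoped BigOperators
open Matrix

noncomputable section

namespace BlockAux

variable {m r : ℕ}

/-- The j-th block of indices. -/
def blk (m r j : ℕ) : Finset (Fin m) :=
  Finset.univ.filter (fun i : Fin m => j * r ≤ (i : ℕ) ∧ (i : ℕ) < (j + 1) * r)

lemma image_blk (j : ℕ) :
    Finset.image (fun i : Fin m => (i : ℕ)) (blk m r j) ⊆
      Finset.Ico (j * r) ((j + 1) * r) := by
  intro a ha
  simp only [blk, Finset.mem_image, Finset.mem_filter, Finset.mem_univ, true_and,
    Finset.mem_Ico] at ha ⊢
  rcases ha with ⟨i, hi, rfl⟩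
  exact hi

lemma card_blk_le (j : ℕ) : (blk m r j).card ≤ r := by
  have h1 : (blk m r j).card =
      (Finset.image (fun i : Fin m => (i : ℕ)) (blk m r j)).card :=
    (Finset.card_image_of_injective _ Fin.val_injective).symm
  calc (blk m r j).card = _ := h1
    _ ≤ (Finset.Ico (j * r) ((j + 1) * r)).card := Finset.card_le_card (image_blk j)
    _ = r := by rw [Nat.card_Ico, add_mul, one_mul, Nat.add_sub_cancel_left]

lemma card_blk (j : ℕ) (h : (j + 1) * r ≤ m) : (blk m r j).card = r := by
  have h1 : (blk m r j).card =
      (Finset.image (fun i : Fin m => (i : ℕ)) (blk m r j)).card :=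
    (Finset.card_image_of_injective _ Fin.val_injective).symm
  have h2 : Finset.image (fun i : Fin m => (i : ℕ)) (blk m r j)
      = Finset.Ico (j * r) ((j + 1) * r) := by
    apply Finset.Subset.antisymm (image_blk j)
    intro a ha
    simp only [Finset.mem_Ico] at ha
    simp only [blk, Finset.mem_image, Finset.mem_filter, Finset.mem_univ, true_and]
    exact ⟨⟨a, lt_of_lt_of_le ha.2 h⟩, ha, rfl⟩
  rw [h1, h2, Nat.card_Ico, add_mul, one_mul, Nat.add_sub_cancel_left]

lemma blk_disjoint {a b : ℕ} (hr : 1 ≤ r) (hab : a ≠ b) :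
    Disjoint (blk m r a) (blk m r b) := by
  wlog h : a < b generalizing a b
  · exact (this hab.symm (by omega)).symm
  rw [Finset.disjoint_left]
  rintro i hia hib
  simp only [blk, Finset.mem_filter, Finset.mem_univ, true_and] at hia hib
  have hle : (a + 1) * r ≤ b * r := Nat.mul_le_mul_right r h
  exact lt_irrefl (i : ℕ) (lt_of_lt_of_le hia.2 (le_trans hle hib.1))

end BlockAux

open BlockAux

/-- For a nonincreasing nonnegative sequence σ split into consecutive blocks of
length r, the sum of the ℓ₂ norms of the blocks is at most ‖σ‖₂ + ‖σ‖₁/√r. -/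
theorem block_l2_sum_le {m r : ℕ} (hr : 1 ≤ r) (σ : Fin m → ℝ)
    (hnonneg : ∀ i, 0 ≤ σ i) (hmono : ∀ i j : Fin m, i ≤ j → σ j ≤ σ i) :
    ∑ j ∈ Finset.range ((m + r - 1) / r),
        Real.sqrt (∑ i ∈ Finset.univ.filter
          (fun i : Fin m => j * r ≤ (i : ℕ) ∧ (i : ℕ) < (j + 1) * r), σ i ^ 2) ≤
      Real.sqrt (∑ i, σ i ^ 2) + (∑ i, σ i) / Real.sqrt r := by
  classical
  have hr0 : 0 < r := hr
  have hrR : (0 : ℝ) < r := by exact_mod_cast hr0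
  have hsq : (0 : ℝ) < Real.sqrt r := Real.sqrt_pos.mpr hrR
  -- abbreviations
  set f : ℕ → ℝ := fun j => Real.sqrt (∑ i ∈ blk m r j, σ i ^ 2) with hf
  set S : ℕ → ℝ := fun j => ∑ i ∈ blk m r j, σ i with hS
  have hgoal : ∑ j ∈ Finset.range ((m + r - 1) / r),
      Real.sqrt (∑ i ∈ Finset.univ.filter
        (fun i : Fin m => j * r ≤ (i : ℕ) ∧ (i : ℕ) < (j + 1) * r), σ i ^ 2)
      = ∑ j ∈ Finset.range ((m + r - 1) / r), f j := rfl
  rw [hgoal]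
  rcases Nat.eq_zero_or_pos m with hm | hm
  · subst hm
    have : (0 + r - 1) / r = 0 := Nat.div_eq_of_lt (by omega)
    rw [this]
    simp only [Finset.range_zero, Finset.sum_empty]
    have h1 : (0:ℝ) ≤ Real.sqrt (∑ i : Fin 0, σ i ^ 2) := Real.sqrt_nonneg _
    have h2 : (0:ℝ) ≤ (∑ i : Fin 0, σ i) / Real.sqrt r := by
      apply div_nonneg _ (Real.sqrt_nonneg _)
      exact Finset.sum_nonneg fun i _ => hnonneg i
    exact add_nonneg h1 h2
  · set N := (m - 1) / r with hN
    have hJ : (m + r - 1) / r = N + 1 := by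
      rw [hN, show m + r - 1 = (m - 1) + r by omega, Nat.add_div_right _ hr0]
    rw [hJ, Finset.sum_range_succ' f N]
    -- bound f 0 by the full ℓ₂ norm
    have h0 : f 0 ≤ Real.sqrt (∑ i, σ i ^ 2) := by
      apply Real.sqrt_le_sqrt
      exact Finset.sum_le_sum_of_subset_of_nonneg (Finset.filter_subset _ _)
        (fun i _ _ => sq_nonneg _)
    -- key bound for the shifted blocks
    have key : ∀ j ∈ Finset.range N, f (j + 1) ≤ S j / Real.sqrt r := by
      intro j hj
      rw [Finset.mem_range] at hj
      have hjm : (j + 1) * r ≤ m := by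
        have h1 : j + 1 ≤ N := hj
        have h2 : (j + 1) * r ≤ N * r := Nat.mul_le_mul_right r h1
        have h3 : N * r ≤ m - 1 := Nat.div_mul_le_self _ _
        omega
      have hcard : (blk m r j).card = r := card_blk j hjm
      have hSnn : 0 ≤ S j := Finset.sum_nonneg fun i _ => hnonneg i
      set a : ℝ := S j / r with ha
      have hann : 0 ≤ a := div_nonneg hSnn hrR.le
      -- each entry of block j+1 is ≤ a
      have hle : ∀ i ∈ blk m r (j + 1), σ i ≤ a := by
        intro i hi
        simp only [blk, Finset.mem_filter, Finset.mem_univ, true_and] at hi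
        have hstep : (r : ℝ) * σ i ≤ S j := by
          have : ∑ _k ∈ blk m r j, σ i ≤ S j := by
            apply Finset.sum_le_sum
            intro k hk
            simp only [blk, Finset.mem_filter, Finset.mem_univ, true_and] at hk
            apply hmono k i
            have : (k : ℕ) < (i : ℕ) := lt_of_lt_of_le hk.2 hi.1
            exact le_of_lt this
          simpa [Finset.sum_const, hcard, nsmul_eq_mul] using this
        rw [ha, le_div_iff₀ hrR]
        linarith
      have hsum : ∑ i ∈ blk m r (j + 1), σ i ^ 2 ≤ (r : ℝ) * a ^ 2 := by
        calc ∑ i ∈ blk m r (j + 1), σ i ^ 2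
            ≤ ∑ _i ∈ blk m r (j + 1), a ^ 2 :=
              Finset.sum_le_sum fun i hi =>
                pow_le_pow_left₀ (hnonneg i) (hle i hi) 2
          _ = ((blk m r (j + 1)).card : ℝ) * a ^ 2 := by
              rw [Finset.sum_const, nsmul_eq_mul]
          _ ≤ (r : ℝ) * a ^ 2 := by
              apply mul_le_mul_of_nonneg_right _ (sq_nonneg a)
              exact_mod_cast card_blk_le (j + 1)
      calc f (j + 1) ≤ Real.sqrt ((r : ℝ) * a ^ 2) := Real.sqrt_le_sqrt hsum
        _ = Real.sqrt r * a := by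
            rw [Real.sqrt_mul hrR.le, Real.sqrt_sq hann]
        _ = S j / Real.sqrt r := by
            rw [ha]
            rw [eq_div_iff (ne_of_gt hsq)]
            field_simp
            linear_combination S j * Real.mul_self_sqrt hrR.le
    have hsum1 : ∑ j ∈ Finset.range N, f (j + 1) ≤
        (∑ j ∈ Finset.range N, S j) / Real.sqrt r := by
      rw [Finset.sum_div]
      exact Finset.sum_le_sum key
    have hsum2 : ∑ j ∈ Finset.range N, S j ≤ ∑ i, σ i := by
      have hdisj : (↑(Finset.range N) : Set ℕ).PairwiseDisjoint (blk m r) := by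
        intro a _ b _ hab
        exact blk_disjoint hr hab
      rw [hS]
      rw [← Finset.sum_biUnion hdisj]
      exact Finset.sum_le_sum_of_subset_of_nonneg (Finset.subset_univ _)
        (fun i _ _ => hnonneg i)
    have h2 : (∑ j ∈ Finset.range N, S j) / Real.sqrt r ≤ (∑ i, σ i) / Real.sqrt r := by
      gcongr
    linarith
end
end

section
/- For any matrix Y ∈ ℝ^{m×n}, any rank r, and any μ > 0, the soft shrinkage operator and the hard thresholding operator commute: S_μ(R_r(Y)) = R_r(S_μ(Y)). -/
open scoped BigOperators
open Matrix

noncomputable section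

/-- Rectangular diagonal matrix with diagonal entries σ. -/
def rectDiag {m n : ℕ} (σ : Fin m → ℝ) : Matrix (Fin m) (Fin n) ℝ :=
  Matrix.of fun i j => if (j : ℕ) = (i : ℕ) then σ i else 0

/-- `(U, σ, V)` is a (full) singular value decomposition of `Y`, with the
singular values σ nonnegative and nonincreasing. -/
def IsSVD {m n : ℕ} (Y : Matrix (Fin m) (Fin n) ℝ) (U : Matrix (Fin m) (Fin m) ℝ)
    (σ : Fin m → ℝ) (V : Matrix (Fin n) (Fin n) ℝ) : Prop :=
  Uᵀ * U = 1 ∧ Vᵀ * V = 1 ∧ (∀ i, 0 ≤ σ i) ∧ (∀ i j : Fin m, i ≤ j → σ j ≤ σ i) ∧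
    Y = U * rectDiag σ * Vᵀ

/-- `Z = S_μ(Y)`: soft shrinkage of the singular values of `Y` by `μ`. -/
def IsSoftShrink {m n : ℕ} (μ : ℝ) (Y Z : Matrix (Fin m) (Fin n) ℝ) : Prop :=
  ∃ U σ V, IsSVD Y U σ V ∧ Z = U * rectDiag (fun i => max (σ i - μ) 0) * Vᵀ

/-- `Z = R_r(Y)`: hard thresholding keeping the `r` largest singular values of `Y`. -/
def IsHardThresh {m n : ℕ} (r : ℕ) (Y Z : Matrix (Fin m) (Fin n) ℝ) : Prop :=
  ∃ U σ V, IsSVD Y U σ V ∧ Z = U * rectDiag (fun i => if (i : ℕ) < r then σ i else 0) * Vᵀ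

/-! The squared singular values of `A` are the roots of the characteristic polynomial of `A Aᵀ`,
so they are determined by `A`; and for `f` with `f 0 = 0` the matrix `U f(σ) Vᵀ` equals `q(A Aᵀ) A`
for a polynomial `q` interpolating `f(√x)/√x`, so it does not depend on the SVD either. Hence
`S_μ (R_r Y)` can be computed from an SVD of `Y` itself, where the two operations visibly commute.
Conversely, the SVD of `S_μ Y` used by `R_r` need not come from an SVD of `Y`; gluing its singular
vectors for the nonzero singular values to those of `Y` for the others yields one that does. -/

open Polynomial

namespace Matrix

variable {ι κ R : Type*} [Fintype ι] [DecidableEq ι] [Fintype κ]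

theorem aeval_diagonal [CommSemiring R] (d : ι → R) (q : R[X]) :
    aeval (diagonal d) q = diagonal fun i => q.eval (d i) := by
  simpa [aeval_pi_apply, coe_aeval_eq_eval] using aeval_algHom_apply (diagonalAlgHom R) d q

theorem aeval_conj_of_transpose_mul_self [CommRing R] {U : Matrix ι ι R} (hU : Uᵀ * U = 1)
    (M : Matrix ι ι R) (q : R[X]) : aeval (U * M * Uᵀ) q = U * aeval M q * Uᵀ := by
  let u : (Matrix ι ι R)ˣ := ⟨U, Uᵀ, mul_eq_one_comm.mp hU, hU⟩
  simpa [ConjAct.units_smul_def, u] using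
    aeval_algHom_apply (MulSemiringAction.toAlgHom R _ (ConjAct.toConjAct u)) M q

theorem transpose_mul_mul_eq_of_mul_mul_transpose_eq [DecidableEq κ] [CommRing R]
    {A A' : Matrix ι ι R} {B B' : Matrix κ κ R} {D D' : Matrix ι κ R} (hA' : A'ᵀ * A' = 1)
    (hB : Bᵀ * B = 1) (h : A * D * Bᵀ = A' * D' * B'ᵀ) : A'ᵀ * A * D = D' * (B'ᵀ * B) := by
  calc A'ᵀ * A * D = A'ᵀ * (A * D * Bᵀ) * B := by
        simp only [Matrix.mul_assoc, hB, Matrix.mul_one]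
    _ = D' * (B'ᵀ * B) := by
        rw [h]; simp only [← Matrix.mul_assoc, hA', Matrix.one_mul]

theorem mul_mul_one_sub_eq_zero_of_intertwine [CommRing R] {P X : Matrix ι ι R}
    {Y : Matrix κ κ R} {H : Matrix ι κ R} {K : Matrix κ ι R} (hHK : H * K = P)
    (hK : K * X = Y * K) (hKP : K * (1 - P) = 0) : P * X * (1 - P) = 0 := by
  nth_rw 1 [← hHK]
  rw [Matrix.mul_assoc H, hK, Matrix.mul_assoc, Matrix.mul_assoc, hKP, Matrix.mul_zero,
    Matrix.mul_zero]

def projMix [Ring R] (Q A B : Matrix ι ι R) : Matrix ι ι R :=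
  A * Q + B * (1 - Q)

theorem transpose_mul_self_projMix [CommRing R] {A B Q : Matrix ι ι R} (hA : Aᵀ * A = 1)
    (hB : Bᵀ * B = 1) (hQ : Qᵀ = Q) (hQQ : Q * Q = Q) (hAB : Q * (Aᵀ * B) * (1 - Q) = 0) :
    (projMix Q A B)ᵀ * projMix Q A B = 1 := by
  have hBA : (1 - Q) * (Bᵀ * A) * Q = 0 := by
    simpa [Matrix.mul_assoc, hQ] using congrArg transpose hAB
  calc (projMix Q A B)ᵀ * projMix Q A B
      = Q * (Aᵀ * A) * Q + Q * (Aᵀ * B) * (1 - Q) + (1 - Q) * (Bᵀ * A) * Q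
        + (1 - Q) * (Bᵀ * B) * (1 - Q) := by
        simp only [projMix, transpose_add, transpose_mul, transpose_sub, transpose_one, hQ]
        noncomm_ring
    _ = 1 := by
        rw [hA, hB, hAB, hBA]; noncomm_ring; rw [hQQ]; abel

end Matrix

theorem Antitone.eq_of_univ_val_map_eq {α : Type*} [PartialOrder α] {m : ℕ} {f g : Fin m → α}
    (hf : Antitone f) (hg : Antitone g)
    (h : Finset.univ.val.map f = Finset.univ.val.map g) : f = g := by
  refine List.ofFn_injective (List.Perm.eq_of_pairwise' (r := (· ≥ ·))
    (List.pairwise_ofFn.mpr fun i j hij => hf hij.le)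
    (List.pairwise_ofFn.mpr fun i j hij => hg hij.le) ?_)
  rwa [← Multiset.coe_eq_coe, ← Fin.univ_val_map, ← Fin.univ_val_map]

section SVDForm

variable {ι κ : Type*} [Fintype ι] [DecidableEq ι] [Fintype κ]

/-- `U Σ Vᵀ` with `Σ = diagonal σ * E`; `E = rectDiag 1`, the `m × n` matrix `[I 0]`, gives
`U * rectDiag σ * Vᵀ`. -/
def svdForm (U : Matrix ι ι ℝ) (σ : ι → ℝ) (E : Matrix ι κ ℝ) (V : Matrix κ κ ℝ) :
    Matrix ι κ ℝ :=
  U * diagonal σ * E * Vᵀ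

theorem svdForm_add (U : Matrix ι ι ℝ) (a b : ι → ℝ) (E : Matrix ι κ ℝ) (V : Matrix κ κ ℝ) :
    svdForm U a E V + svdForm U b E V = svdForm U (a + b) E V := by
  simp only [svdForm, ← Matrix.add_mul, ← Matrix.mul_add, diagonal_add]
  rfl

theorem svdForm_zero (U : Matrix ι ι ℝ) (E : Matrix ι κ ℝ) (V : Matrix κ κ ℝ) :
    svdForm U 0 E V = 0 := by
  simp [svdForm]

variable [DecidableEq κ] {E : Matrix ι κ ℝ} {U U' : Matrix ι ι ℝ} {V V' : Matrix κ κ ℝ}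

theorem svdForm_mul_transpose (hV : Vᵀ * V = 1) (hE : E * Eᵀ = 1) (σ : ι → ℝ) :
    svdForm U σ E V * (svdForm U σ E V)ᵀ = U * diagonal (fun i => σ i ^ 2) * Uᵀ := by
  simp only [svdForm, transpose_mul, transpose_transpose, diagonal_transpose, Matrix.mul_assoc]
  rw [← Matrix.mul_assoc Vᵀ V, hV, Matrix.one_mul, ← Matrix.mul_assoc E Eᵀ, hE, Matrix.one_mul,
    ← Matrix.mul_assoc (diagonal σ), diagonal_mul_diagonal]
  simp only [sq]

theorem charpoly_svdForm_mul_transpose (hU : Uᵀ * U = 1) (hV : Vᵀ * V = 1) (hE : E * Eᵀ = 1)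
    (σ : ι → ℝ) :
    (svdForm U σ E V * (svdForm U σ E V)ᵀ).charpoly = ∏ i, (X - C (σ i ^ 2)) := by
  rw [svdForm_mul_transpose hV hE, Matrix.mul_assoc, charpoly_mul_comm, Matrix.mul_assoc, hU,
    Matrix.mul_one, charpoly_diagonal]

theorem aeval_svdForm_mul (hU : Uᵀ * U = 1) (hV : Vᵀ * V = 1) (hE : E * Eᵀ = 1) (σ : ι → ℝ)
    (q : ℝ[X]) :
    aeval (svdForm U σ E V * (svdForm U σ E V)ᵀ) q * svdForm U σ E V
      = svdForm U (fun i => q.eval (σ i ^ 2) * σ i) E V := by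
  rw [svdForm_mul_transpose hV hE, aeval_conj_of_transpose_mul_self hU, aeval_diagonal]
  simp only [svdForm, Matrix.mul_assoc]
  rw [← Matrix.mul_assoc Uᵀ U, hU, Matrix.one_mul, ← Matrix.mul_assoc (diagonal _),
    diagonal_mul_diagonal]

theorem svdForm_comp_eq_of_eq (hU : Uᵀ * U = 1) (hV : Vᵀ * V = 1) (hU' : U'ᵀ * U' = 1)
    (hV' : V'ᵀ * V' = 1) (hE : E * Eᵀ = 1) {τ : ι → ℝ} (hτ : ∀ i, 0 ≤ τ i)
    (h : svdForm U τ E V = svdForm U' τ E V') {f : ℝ → ℝ} (hf : f 0 = 0) :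
    svdForm U (fun i => f (τ i)) E V = svdForm U' (fun i => f (τ i)) E V' := by
  obtain ⟨q, hq⟩ : ∃ q : ℝ[X], ∀ i, q.eval (τ i ^ 2) * τ i = f (τ i) := by
    refine ⟨Lagrange.interpolate (Finset.univ.image fun i => τ i ^ 2) id fun x => f √x / √x,
      fun i => ?_⟩
    have hnode := Lagrange.eval_interpolate_at_node (fun x => f √x / √x) (Set.injOn_id _)
      (Finset.mem_image_of_mem (fun i => τ i ^ 2) (Finset.mem_univ i))
    rw [id_eq] at hnode
    rw [hnode]
    rcases (hτ i).eq_or_lt with h0 | hpos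
    · simp [← h0, hf]
    · simp [Real.sqrt_sq (hτ i), hpos.ne']
  simp only [← hq]
  rw [← aeval_svdForm_mul hU hV hE, ← aeval_svdForm_mul hU' hV' hE, h]

theorem eq_of_svdForm_eq {m : ℕ} {E : Matrix (Fin m) κ ℝ} {U U' : Matrix (Fin m) (Fin m) ℝ}
    (hU : Uᵀ * U = 1) (hV : Vᵀ * V = 1) (hU' : U'ᵀ * U' = 1) (hV' : V'ᵀ * V' = 1)
    (hE : E * Eᵀ = 1) {σ σ' : Fin m → ℝ} (hσ0 : ∀ i, 0 ≤ σ i) (hσ : Antitone σ)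
    (hσ0' : ∀ i, 0 ≤ σ' i) (hσ' : Antitone σ') (h : svdForm U σ E V = svdForm U' σ' E V') :
    σ = σ' := by
  have hsq : (fun i => σ i ^ 2) = fun i => σ' i ^ 2 := by
    refine Antitone.eq_of_univ_val_map_eq (fun i j hij => pow_le_pow_left₀ (hσ0 j) (hσ hij) 2)
      (fun i j hij => pow_le_pow_left₀ (hσ0' j) (hσ' hij) 2) ?_
    have hroots (d : Fin m → ℝ) : (∏ i, (X - C (d i))).roots = Finset.univ.val.map d := by
      rw [Finset.prod_eq_multiset_prod, ← roots_multiset_prod_X_sub_C (Finset.univ.val.map d),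
        Multiset.map_map]
      rfl
    rw [← hroots, ← hroots, ← charpoly_svdForm_mul_transpose hU hV hE, h,
      charpoly_svdForm_mul_transpose hU' hV' hE]
  funext i
  exact (pow_left_inj₀ (hσ0 i) (hσ0' i) two_ne_zero).mp (congrFun hsq i)

end SVDForm

section SupportProj

variable {ι : Type*} [DecidableEq ι] {τ : ι → ℝ}

def supportProj (τ : ι → ℝ) : Matrix ι ι ℝ :=
  diagonal fun i => if τ i = 0 then 0 else 1

theorem one_sub_supportProj : 1 - supportProj τ = diagonal fun i => if τ i = 0 then 1 else 0 := by
  rw [← diagonal_one, supportProj, diagonal_sub]; congr 1; funext i; split_ifs <;> simp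

theorem supportProj_transpose : (supportProj τ)ᵀ = supportProj τ :=
  diagonal_transpose _

theorem supportProj_mul_self [Fintype ι] : supportProj τ * supportProj τ = supportProj τ := by
  rw [supportProj, diagonal_mul_diagonal]; congr 1; funext i; split_ifs <;> simp

theorem diagonal_inv_mul_diagonal [Fintype ι] : diagonal τ⁻¹ * diagonal τ = supportProj τ := by
  rw [supportProj, diagonal_mul_diagonal]; congr 1; funext i
  by_cases hi : τ i = 0 <;> simp [hi]

theorem diagonal_mul_supportProj [Fintype ι] : diagonal τ * supportProj τ = diagonal τ := by
  rw [supportProj, diagonal_mul_diagonal]; congr 1; funext i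
  by_cases hi : τ i = 0 <;> simp [hi]

theorem diagonal_mul_one_sub_supportProj [Fintype ι] : diagonal τ * (1 - supportProj τ) = 0 := by
  rw [Matrix.mul_sub, Matrix.mul_one, diagonal_mul_supportProj, sub_self]

end SupportProj

section Mix

variable {ι κ : Type*} [Fintype ι] [DecidableEq ι] [Fintype κ] [DecidableEq κ]
  {E : Matrix ι κ ℝ} {U U' : Matrix ι ι ℝ} {V V' : Matrix κ κ ℝ} {τ : ι → ℝ}

theorem transpose_mul_self_projMix_supportProj (hU : Uᵀ * U = 1) (hU' : U'ᵀ * U' = 1)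
    (hV' : V'ᵀ * V' = 1) (hE : E * Eᵀ = 1) (h : svdForm U τ E V = svdForm U' τ E V') :
    (projMix (supportProj τ) U' U)ᵀ * projMix (supportProj τ) U' U = 1 := by
  -- The cross terms between the two column blocks vanish because `Σᵀ (U'ᵀ U) = (V'ᵀ V) Σᵀ`
  -- for `Σ = diagonal τ * E`, and `Σᵀ` is invertible on the support of `τ`.
  have hint : V'ᵀ * V * (diagonal τ * E)ᵀ = (diagonal τ * E)ᵀ * (U'ᵀ * U) := by
    refine transpose_mul_mul_eq_of_mul_mul_transpose_eq hV' hU ?_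
    simpa only [svdForm, transpose_mul, transpose_transpose, Matrix.mul_assoc]
      using congrArg transpose h
  refine transpose_mul_self_projMix hU' hU supportProj_transpose supportProj_mul_self
    (mul_mul_one_sub_eq_zero_of_intertwine (H := diagonal τ⁻¹ * E) ?_ hint.symm ?_)
  · rw [transpose_mul, diagonal_transpose, Matrix.mul_assoc, ← Matrix.mul_assoc E, hE,
      Matrix.one_mul, diagonal_inv_mul_diagonal]
  · rw [transpose_mul, diagonal_transpose, Matrix.mul_assoc, diagonal_mul_one_sub_supportProj,
      Matrix.mul_zero]

theorem transpose_mul_self_projMix_conj_supportProj (hU' : U'ᵀ * U' = 1) (hV : Vᵀ * V = 1)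
    (hV' : V'ᵀ * V' = 1) (hE : E * Eᵀ = 1) (h : svdForm U τ E V = svdForm U' τ E V') :
    (projMix (Eᵀ * supportProj τ * E) V' V)ᵀ * projMix (Eᵀ * supportProj τ * E) V' V = 1 := by
  have hint : U'ᵀ * U * (diagonal τ * E) = diagonal τ * E * (V'ᵀ * V) :=
    transpose_mul_mul_eq_of_mul_mul_transpose_eq hU' hV
      (by simpa only [svdForm, Matrix.mul_assoc] using h)
  have hQQ : Eᵀ * supportProj τ * E * (Eᵀ * supportProj τ * E) = Eᵀ * supportProj τ * E := by
    simp only [Matrix.mul_assoc]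
    rw [← Matrix.mul_assoc E Eᵀ, hE, Matrix.one_mul, ← Matrix.mul_assoc (supportProj τ),
      supportProj_mul_self]
  refine transpose_mul_self_projMix hV' hV (by simp [Matrix.mul_assoc, supportProj_transpose]) hQQ
    (mul_mul_one_sub_eq_zero_of_intertwine (H := Eᵀ * diagonal τ⁻¹) ?_ hint.symm ?_)
  · rw [Matrix.mul_assoc, ← Matrix.mul_assoc (diagonal τ⁻¹), diagonal_inv_mul_diagonal,
      Matrix.mul_assoc]
  · rw [Matrix.mul_sub, Matrix.mul_one, Matrix.mul_assoc, ← Matrix.mul_assoc E,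
      ← Matrix.mul_assoc E, hE, Matrix.one_mul, sub_eq_zero, ← Matrix.mul_assoc,
      diagonal_mul_supportProj]

theorem svdForm_projMix (hE : E * Eᵀ = 1) (U U' : Matrix ι ι ℝ) (V V' : Matrix κ κ ℝ)
    (τ ρ : ι → ℝ) :
    svdForm (projMix (supportProj τ) U' U) ρ E (projMix (Eᵀ * supportProj τ * E) V' V)
      = svdForm U' (fun i => if τ i = 0 then 0 else ρ i) E V'
        + svdForm U (fun i => if τ i = 0 then ρ i else 0) E V := by
  set Q := Eᵀ * supportProj τ * E with hQ
  have hQt : Qᵀ = Q := by simp [hQ, Matrix.mul_assoc, supportProj_transpose]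
  have hEQ : E * Q = supportProj τ * E := by simp only [hQ, ← Matrix.mul_assoc, hE, Matrix.one_mul]
  have hEQ' : E * (1 - Q) = (1 - supportProj τ) * E := by
    rw [Matrix.mul_sub, hEQ, Matrix.mul_one, Matrix.sub_mul, Matrix.one_mul]
  have hdd (a b : ι → ℝ) (M : Matrix ι κ ℝ) :
      diagonal a * (diagonal b * M) = diagonal (fun i => a i * b i) * M := by
    rw [← Matrix.mul_assoc, diagonal_mul_diagonal]
  simp only [svdForm, projMix, transpose_add, transpose_mul, transpose_sub, transpose_one, hQt,
    Matrix.mul_add, Matrix.mul_assoc]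
  rw [← Matrix.mul_assoc E Q, hEQ, ← Matrix.mul_assoc E (1 - Q), hEQ', one_sub_supportProj]
  simp only [Matrix.add_mul, Matrix.mul_assoc, hdd, supportProj]
  simp +contextual

theorem svdForm_projMix_of_supported (hE : E * Eᵀ = 1) (U U' : Matrix ι ι ℝ) (V V' : Matrix κ κ ℝ)
    {ρ : ι → ℝ} (hρ : ∀ i, τ i = 0 → ρ i = 0) :
    svdForm (projMix (supportProj τ) U' U) ρ E (projMix (Eᵀ * supportProj τ * E) V' V)
      = svdForm U' ρ E V' := by
  rw [svdForm_projMix hE]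
  have hon : (fun i => if τ i = 0 then 0 else ρ i) = ρ := funext fun i => by
    split_ifs with hi <;> simp [hρ i, hi]
  have hoff : (fun i => if τ i = 0 then ρ i else 0) = 0 := funext fun i => by
    split_ifs with hi <;> simp [hρ i, hi]
  rw [hon, hoff, svdForm_zero, add_zero]

theorem svdForm_projMix_of_comp (hU : Uᵀ * U = 1) (hV : Vᵀ * V = 1) (hU' : U'ᵀ * U' = 1)
    (hV' : V'ᵀ * V' = 1) (hE : E * Eᵀ = 1) (hτ : ∀ i, 0 ≤ τ i)
    (h : svdForm U τ E V = svdForm U' τ E V') {σ : ι → ℝ} {g : ℝ → ℝ}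
    (hσ : ∀ i, τ i ≠ 0 → σ i = g (τ i)) :
    svdForm (projMix (supportProj τ) U' U) σ E (projMix (Eᵀ * supportProj τ * E) V' V)
      = svdForm U σ E V := by
  have hon : (fun i => if τ i = 0 then 0 else σ i)
      = fun i => (fun x => if x = 0 then 0 else g x) (τ i) :=
    funext fun i => by by_cases hi : τ i = 0 <;> simp [hi, hσ i]
  rw [svdForm_projMix hE, hon, ← svdForm_comp_eq_of_eq hU hV hU' hV' hE hτ h
    (f := fun x => if x = 0 then 0 else g x) (if_pos rfl), ← hon, svdForm_add]
  congr 1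
  funext i
  by_cases hi : τ i = 0 <;> simp [hi]

end Mix

theorem rectDiag_eq_diagonal_mul {m n : ℕ} (σ : Fin m → ℝ) :
    (rectDiag σ : Matrix (Fin m) (Fin n) ℝ)
      = diagonal σ * (rectDiag 1 : Matrix (Fin m) (Fin n) ℝ) := by
  refine Matrix.ext fun i j => ?_
  rw [diagonal_mul]
  simp [rectDiag]

theorem rectDiag_one_mul_transpose {m n : ℕ} (hmn : m ≤ n) :
    (rectDiag 1 : Matrix (Fin m) (Fin n) ℝ) * (rectDiag 1 : Matrix (Fin m) (Fin n) ℝ)ᵀ = 1 := by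
  refine Matrix.ext fun i k => ?_
  rw [mul_apply, Finset.sum_eq_single (Fin.castLE hmn i)]
  · simp [rectDiag, one_apply, Fin.ext_iff, eq_comm]
  · intro j _ hj
    simp only [rectDiag, of_apply, transpose_apply, Pi.one_apply]
    rw [if_neg fun h => hj (Fin.ext (by simpa using h)), zero_mul]
  · simp

theorem mul_rectDiag_mul_transpose {m n : ℕ} (U : Matrix (Fin m) (Fin m) ℝ) (σ : Fin m → ℝ)
    (V : Matrix (Fin n) (Fin n) ℝ) : U * rectDiag σ * Vᵀ = svdForm U σ (rectDiag 1) V := by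
  rw [rectDiag_eq_diagonal_mul σ, svdForm, Matrix.mul_assoc U (diagonal σ)]
  -- The outer product on the left elaborates through the `CStarMatrix` instance, which agrees
  -- with matrix multiplication only up to unfolding.
  rfl

theorem antitone_truncate {m : ℕ} {σ : Fin m → ℝ} (hσ0 : ∀ i, 0 ≤ σ i) (hσ : Antitone σ)
    (r : ℕ) : Antitone fun i : Fin m => if (i : ℕ) < r then σ i else 0 := by
  intro i j hij
  dsimp only
  split_ifs with hj hi
  · exact hσ hij
  · exact absurd (lt_of_le_of_lt (Fin.le_def.mp hij) hj) hi
  · exact hσ0 i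
  · exact le_rfl

theorem truncate_nonneg {m : ℕ} {σ : Fin m → ℝ} (hσ0 : ∀ i, 0 ≤ σ i) (r : ℕ) (i : Fin m) :
    0 ≤ if (i : ℕ) < r then σ i else 0 := by
  split_ifs
  exacts [hσ0 i, le_rfl]

theorem antitone_shrink {α : Type*} [Preorder α] {σ : α → ℝ} (hσ : Antitone σ) (μ : ℝ) :
    Antitone fun i => max (σ i - μ) 0 :=
  fun _ _ hij => max_le_max (sub_le_sub_right (hσ hij) μ) le_rfl

theorem max_sub_ite_zero (p : Prop) [Decidable p] {μ : ℝ} (hμ : 0 ≤ μ) (s : ℝ) :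
    max ((if p then s else 0) - μ) 0 = if p then max (s - μ) 0 else 0 := by
  split_ifs <;> simp [hμ]

theorem max_sub_add_of_ne_zero {s μ : ℝ} (h : max (s - μ) 0 ≠ 0) : max (s - μ) 0 + μ = s := by
  have hpos : 0 < s - μ := lt_of_not_ge fun hle => h (max_eq_right hle)
  rw [max_eq_left hpos.le, sub_add_cancel]

theorem softShrink_hardThresh_of_hardThresh_softShrink {m n : ℕ} (hmn : m ≤ n) {r : ℕ} {μ : ℝ}
    (hμ : 0 ≤ μ) {Y W : Matrix (Fin m) (Fin n) ℝ} :
    (∃ Z, IsHardThresh r Y Z ∧ IsSoftShrink μ Z W) →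
      ∃ Z, IsSoftShrink μ Y Z ∧ IsHardThresh r Z W := by
  simp only [IsHardThresh, IsSoftShrink, IsSVD, mul_rectDiag_mul_transpose]
  set E : Matrix (Fin m) (Fin n) ℝ := rectDiag 1
  have hE : E * Eᵀ = 1 := rectDiag_one_mul_transpose hmn
  rintro ⟨_, ⟨U, σ, V, ⟨hU, hV, hσ0, hσ, rfl⟩, rfl⟩, U', τ, V', ⟨hU', hV', hτ0, hτ, hZ⟩, rfl⟩
  obtain rfl := eq_of_svdForm_eq hU hV hU' hV' hE (truncate_nonneg hσ0 r)
    (antitone_truncate hσ0 hσ r) hτ0 hτ hZ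
  refine ⟨_, ⟨U, σ, V, ⟨hU, hV, hσ0, hσ, rfl⟩, rfl⟩, U, fun i => max (σ i - μ) 0, V,
    ⟨hU, hV, fun _ => le_max_right _ _, antitone_shrink hσ μ, rfl⟩, ?_⟩
  rw [← svdForm_comp_eq_of_eq hU hV hU' hV' hE (truncate_nonneg hσ0 r) hZ
    (f := fun x => max (x - μ) 0) (by simp [hμ])]
  simp only [max_sub_ite_zero _ hμ]

theorem hardThresh_softShrink_of_softShrink_hardThresh {m n : ℕ} (hmn : m ≤ n) {r : ℕ} {μ : ℝ}
    (hμ : 0 ≤ μ) {Y W : Matrix (Fin m) (Fin n) ℝ} :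
    (∃ Z, IsSoftShrink μ Y Z ∧ IsHardThresh r Z W) →
      ∃ Z, IsHardThresh r Y Z ∧ IsSoftShrink μ Z W := by
  simp only [IsHardThresh, IsSoftShrink, IsSVD, mul_rectDiag_mul_transpose]
  set E : Matrix (Fin m) (Fin n) ℝ := rectDiag 1
  have hE : E * Eᵀ = 1 := rectDiag_one_mul_transpose hmn
  rintro ⟨_, ⟨U, σ, V, ⟨hU, hV, hσ0, hσ, rfl⟩, rfl⟩, U', τ, V', ⟨hU', hV', hτ0, hτ, hZ⟩, rfl⟩
  have hτσ : (fun i => max (σ i - μ) 0) = τ :=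
    eq_of_svdForm_eq hU hV hU' hV' hE (fun _ => le_max_right _ _) (antitone_shrink hσ μ) hτ0 hτ hZ
  rw [hτσ] at hZ
  set Ut := projMix (supportProj τ) U' U
  set Vt := projMix (Eᵀ * supportProj τ * E) V' V
  have hUt : Utᵀ * Ut = 1 := transpose_mul_self_projMix_supportProj hU hU' hV' hE hZ
  have hVt : Vtᵀ * Vt = 1 := transpose_mul_self_projMix_conj_supportProj hU' hV hV' hE hZ
  have hY : svdForm U σ E V = svdForm Ut σ E Vt :=
    (svdForm_projMix_of_comp hU hV hU' hV' hE hτ0 hZ (g := (· + μ)) fun i hi => by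
      subst hτσ; exact (max_sub_add_of_ne_zero hi).symm).symm
  refine ⟨svdForm Ut (fun i => if (i : ℕ) < r then σ i else 0) E Vt,
    ⟨Ut, σ, Vt, ⟨hUt, hVt, hσ0, hσ, hY⟩, rfl⟩, Ut, fun i => if (i : ℕ) < r then σ i else 0, Vt,
    ⟨hUt, hVt, truncate_nonneg hσ0 r, antitone_truncate hσ0 hσ r, rfl⟩, ?_⟩
  simp only [max_sub_ite_zero _ hμ, ← hτσ]
  refine (svdForm_projMix_of_supported hE U U' V V' fun i hi => ?_).symm
  simp [(congrFun hτσ i).trans hi]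

/-- The soft shrinkage operator and the hard thresholding operator commute:
S_μ(R_r(Y)) = R_r(S_μ(Y)). -/
theorem softShrink_hardThresh_comm {m n : ℕ} (hmn : m ≤ n) (r : ℕ) (μ : ℝ) (hμ : 0 < μ)
    (Y W : Matrix (Fin m) (Fin n) ℝ) :
    (∃ Z, IsHardThresh r Y Z ∧ IsSoftShrink μ Z W) ↔
      (∃ Z, IsSoftShrink μ Y Z ∧ IsHardThresh r Z W) :=
  ⟨softShrink_hardThresh_of_hardThresh_softShrink hmn hμ.le,
    hardThresh_softShrink_of_softShrink_hardThresh hmn hμ.le⟩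
end
end

section
/- Let X ∈ ℝ^{m×n} have SVD X = U Diag(σ) Vᵀ with U ∈ ℝ^{m×r}, V ∈ ℝ^{n×r}, σ ∈ ℝ₊^r (rank r, nonzero singular values). Then for every W ∈ ℝ^{m×n} with Uᵀ W = 0, W V = 0 and ‖W‖₂ ≤ 1, the matrix U Vᵀ + W is a subgradient of the nuclear norm at X; i.e., for all Z ∈ ℝ^{m×n}, ‖Z‖_* ≥ ‖X‖_* + ⟨U Vᵀ + W, Z − X⟩. -/
open scoped BigOperators
open Matrix

noncomputable section

/-- Nuclear norm: the sum of the singular values of X (square roots of the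
eigenvalues of X Xᵀ). -/
def nuclearNorm {m n : ℕ} (X : Matrix (Fin m) (Fin n) ℝ) : ℝ :=
  ∑ i, Real.sqrt ((Matrix.isHermitian_mul_conjTranspose_self X).eigenvalues i)

/-!
The nuclear norm is the dual of the spectral norm. Diagonalising `Z Zᵀ = P diag(s²) Pᵀ` with `P`
orthogonal gives `Z = P diag(s) Qᵀ` with `Q = Zᵀ P diag(s)⁻¹` of spectral norm at most one, and
`⟨B, U diag(σ) Vᵀ⟩ = tr (Uᵀ B V diag(σ)) ≤ ∑ σ` whenever `B`, `U`, `V` are contractions. Hence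
`⟨A, Z⟩ ≤ ‖Z‖_*` for every contraction `A`, and `B = P Qᵀ` attains `⟨B, X⟩ = ‖X‖_*`, so
`‖X‖_* ≤ ∑ σ`. The matrix `A = U Vᵀ + W` is a contraction with `⟨A, X⟩ = ∑ σ`, so
`‖Z‖_* ≥ ⟨A, Z⟩ = ⟨A, X⟩ + ⟨A, Z - X⟩ ≥ ‖X‖_* + ⟨A, Z - X⟩`.
-/

open scoped Matrix.Norms.L2Operator

namespace Matrix
variable {m n r : Type*} [Fintype m] [Fintype n] [Fintype r]

theorem l2_opNorm_le_one_iff [DecidableEq n] (A : Matrix m n ℝ) :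
    ‖A‖ ≤ 1 ↔ ∀ v : n → ℝ, ∑ i, (A *ᵥ v) i ^ 2 ≤ ∑ j, v j ^ 2 := by
  rw [l2_opNorm_def, ContinuousLinearMap.opNorm_le_iff zero_le_one,
    (WithLp.toLp_surjective 2).forall]
  refine forall_congr' fun v => ?_
  rw [one_mul, ← sq_le_sq₀ (norm_nonneg _) (norm_nonneg _), EuclideanSpace.norm_sq_eq,
    EuclideanSpace.norm_sq_eq]
  simp

theorem l2_opNorm_transpose [DecidableEq m] [DecidableEq n] (A : Matrix m n ℝ) : ‖Aᵀ‖ = ‖A‖ := by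
  rw [← conjTranspose_eq_transpose_of_trivial, l2_opNorm_conjTranspose]

theorem l2_opNorm_le_one_of_transpose_mul_self [DecidableEq m] [DecidableEq n] {A : Matrix m n ℝ}
    (h : ‖Aᵀ * A‖ ≤ 1) : ‖A‖ ≤ 1 := by
  rw [← conjTranspose_eq_transpose_of_trivial, l2_opNorm_conjTranspose_mul_self] at h
  nlinarith [norm_nonneg A]

theorem l2_opNorm_one_le_one [DecidableEq n] : ‖(1 : Matrix n n ℝ)‖ ≤ 1 :=
  (l2_opNorm_le_one_iff 1).2 fun v => by rw [one_mulVec]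

theorem l2_opNorm_le_one_of_transpose_mul_self_eq_one [DecidableEq m] [DecidableEq n]
    {A : Matrix m n ℝ} (h : Aᵀ * A = 1) : ‖A‖ ≤ 1 :=
  l2_opNorm_le_one_of_transpose_mul_self (h ▸ l2_opNorm_one_le_one)

theorem apply_self_le_one_of_l2_opNorm_le_one [DecidableEq n] {A : Matrix n n ℝ} (h : ‖A‖ ≤ 1)
    (i : n) : A i i ≤ 1 := by
  have hcol := (l2_opNorm_le_one_iff A).1 h (Pi.single i 1)
  simp only [mulVec_single_one, Pi.single_apply, ite_pow, one_pow, zero_pow two_ne_zero,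
    Finset.sum_ite_eq', Finset.mem_univ, if_true] at hcol
  have : A i i ^ 2 ≤ 1 :=
    (Finset.single_le_sum (f := fun k => A k i ^ 2) (fun _ _ => sq_nonneg _)
      (Finset.mem_univ i)).trans hcol
  nlinarith [sq_nonneg (A i i - 1)]

theorem trace_mul_diagonal_le_sum [DecidableEq n] {A : Matrix n n ℝ} (hA : ‖A‖ ≤ 1) {σ : n → ℝ}
    (hσ : 0 ≤ σ) : trace (A * diagonal σ) ≤ ∑ i, σ i := by
  simp only [trace, diag, mul_diagonal]
  exact Finset.sum_le_sum fun i _ =>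
    mul_le_of_le_one_left (hσ i) (apply_self_le_one_of_l2_opNorm_le_one hA i)

theorem sum_sq_eq_dotProduct_self (v : n → ℝ) : ∑ i, v i ^ 2 = v ⬝ᵥ v := by
  simp only [dotProduct, sq]

theorem mulVec_dotProduct_mulVec {p : Type*} [Fintype p] (A : Matrix m n ℝ) (B : Matrix m p ℝ)
    (x : n → ℝ) (y : p → ℝ) : A *ᵥ x ⬝ᵥ B *ᵥ y = x ⬝ᵥ (Aᵀ * B) *ᵥ y := by
  rw [← mulVec_mulVec, dotProduct_transpose_mulVec, dotProduct_comm]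

theorem l2_opNorm_mul_transpose_add_le_one [DecidableEq n] [DecidableEq r] {U : Matrix m r ℝ}
    {V : Matrix n r ℝ} {W : Matrix m n ℝ} (hU : Uᵀ * U = 1) (hV : Vᵀ * V = 1)
    (hUW : Uᵀ * W = 0) (hWV : W * V = 0) (hW : ‖W‖ ≤ 1) : ‖U * Vᵀ + W‖ ≤ 1 := by
  -- `U Vᵀ v ⟂ W v` and `W v = W (v - V Vᵀ v)`, so
  -- `‖(U Vᵀ + W) v‖² ≤ ‖Vᵀ v‖² + ‖v - V Vᵀ v‖² = ‖v‖²`.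
  simp only [l2_opNorm_le_one_iff, sum_sq_eq_dotProduct_self] at hW ⊢
  intro v
  rw [add_mulVec, ← mulVec_mulVec]
  set y := Vᵀ *ᵥ v
  have hWv : W *ᵥ v = W *ᵥ (v - V *ᵥ y) := by
    rw [mulVec_sub, mulVec_mulVec, hWV, zero_mulVec, sub_zero]
  have hUy : U *ᵥ y ⬝ᵥ U *ᵥ y = y ⬝ᵥ y := by rw [mulVec_dotProduct_mulVec, hU, one_mulVec]
  have hVy : V *ᵥ y ⬝ᵥ V *ᵥ y = y ⬝ᵥ y := by rw [mulVec_dotProduct_mulVec, hV, one_mulVec]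
  have hUyWv : U *ᵥ y ⬝ᵥ W *ᵥ v = 0 := by
    rw [mulVec_dotProduct_mulVec, hUW, zero_mulVec, dotProduct_zero]
  have hvVy : v ⬝ᵥ V *ᵥ y = y ⬝ᵥ y := by rw [dotProduct_mulVec, ← mulVec_transpose]
  have hWv_le := hW (v - V *ᵥ y)
  rw [← hWv] at hWv_le
  simp only [add_dotProduct, dotProduct_add, sub_dotProduct, dotProduct_sub,
    dotProduct_comm (W *ᵥ v) (U *ᵥ y), dotProduct_comm (V *ᵥ y) v] at hWv_le ⊢
  linarith

end Matrix

open Matrix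

section SingularValueDecomposition
variable {m n : Type*} [Fintype m] [Fintype n] [DecidableEq m] (Z : Matrix m n ℝ)

def svdLeft : Matrix m m ℝ := (isHermitian_mul_conjTranspose_self Z).eigenvectorUnitary

def singularValues (i : m) : ℝ := √((isHermitian_mul_conjTranspose_self Z).eigenvalues i)

/-- Since `0⁻¹ = 0`, the columns belonging to zero singular values vanish. -/
def svdRight : Matrix n m ℝ := Zᵀ * svdLeft Z * diagonal (singularValues Z)⁻¹

theorem singularValues_nonneg : 0 ≤ singularValues Z := fun _ => Real.sqrt_nonneg _

theorem svdLeft_transpose_mul_self : (svdLeft Z)ᵀ * svdLeft Z = 1 := by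
  rw [svdLeft, ← conjTranspose_eq_transpose_of_trivial, ← star_eq_conjTranspose]
  exact Unitary.coe_star_mul_self _

theorem svdLeft_mul_transpose_self : svdLeft Z * (svdLeft Z)ᵀ = 1 :=
  mul_eq_one_comm.1 (svdLeft_transpose_mul_self Z)

theorem svdLeft_transpose_mul_mul_svdLeft :
    (svdLeft Z)ᵀ * (Z * Zᵀ) * svdLeft Z = diagonal (singularValues Z ^ 2) := by
  have hH := isHermitian_mul_conjTranspose_self Z
  have h := hH.conjStarAlgAut_star_eigenvectorUnitary
  rw [Unitary.conjStarAlgAut_star_apply] at h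
  rw [svdLeft, ← conjTranspose_eq_transpose_of_trivial Z, ← conjTranspose_eq_transpose_of_trivial,
    ← star_eq_conjTranspose, h]
  congr 1
  ext i
  exact (Real.sq_sqrt ((posSemidef_self_mul_conjTranspose Z).eigenvalues_nonneg i)).symm

theorem svdRight_transpose_mul_self :
    (svdRight Z)ᵀ * svdRight Z = diagonal (singularValues Z * (singularValues Z)⁻¹) := by
  calc (svdRight Z)ᵀ * svdRight Z
      = diagonal (singularValues Z)⁻¹ * ((svdLeft Z)ᵀ * (Z * Zᵀ) * svdLeft Z) *
          diagonal (singularValues Z)⁻¹ := by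
        simp only [svdRight, transpose_mul, diagonal_transpose, transpose_transpose,
          Matrix.mul_assoc]
    _ = _ := by
        rw [svdLeft_transpose_mul_mul_svdLeft, diagonal_mul_diagonal, diagonal_mul_diagonal]
        congr 1
        ext i
        simp only [Pi.mul_apply, Pi.inv_apply, Pi.pow_apply]
        rcases eq_or_ne (singularValues Z i) 0 with h | h
        · simp [h]
        · field_simp

theorem l2_opNorm_svdRight_le_one [DecidableEq n] : ‖svdRight Z‖ ≤ 1 := by
  refine l2_opNorm_le_one_of_transpose_mul_self ?_
  rw [svdRight_transpose_mul_self, l2_opNorm_diagonal]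
  refine (pi_norm_le_iff_of_nonneg zero_le_one).2 fun i => ?_
  rcases eq_or_ne (singularValues Z i) 0 with h | h <;> simp [h]

theorem diagonal_mul_inv_mul_svdLeft_transpose_mul :
    diagonal (singularValues Z * (singularValues Z)⁻¹) * ((svdLeft Z)ᵀ * Z) =
      (svdLeft Z)ᵀ * Z := by
  have hD : 1 - diagonal (singularValues Z * (singularValues Z)⁻¹) =
      diagonal (1 - singularValues Z * (singularValues Z)⁻¹) := by
    rw [← diagonal_one]
    exact diagonal_sub _ _
  have hYYt : (svdLeft Z)ᵀ * Z * ((svdLeft Z)ᵀ * Z)ᴴ = diagonal (singularValues Z ^ 2) := by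
    rw [conjTranspose_eq_transpose_of_trivial, ← svdLeft_transpose_mul_mul_svdLeft]
    simp only [transpose_mul, transpose_transpose, Matrix.mul_assoc]
  suffices h : (1 - diagonal (singularValues Z * (singularValues Z)⁻¹)) * ((svdLeft Z)ᵀ * Z) = 0 by
    rwa [Matrix.sub_mul, Matrix.one_mul, sub_eq_zero, eq_comm] at h
  rw [← mul_self_mul_conjTranspose_eq_zero, hYYt, hD, diagonal_mul_diagonal, ← diagonal_zero]
  congr 1
  ext i
  simp only [Pi.sub_apply, Pi.one_apply, Pi.mul_apply, Pi.inv_apply, Pi.pow_apply]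
  rcases eq_or_ne (singularValues Z i) 0 with h | h
  · simp [h]
  · field_simp
    ring

theorem svdLeft_mul_diagonal_mul_svdRight_transpose :
    svdLeft Z * diagonal (singularValues Z) * (svdRight Z)ᵀ = Z := by
  calc svdLeft Z * diagonal (singularValues Z) * (svdRight Z)ᵀ
      = svdLeft Z * (diagonal (singularValues Z * (singularValues Z)⁻¹) * ((svdLeft Z)ᵀ * Z)) := by
        simp only [svdRight, transpose_mul, diagonal_transpose, transpose_transpose,
          Matrix.mul_assoc]
        rw [← Matrix.mul_assoc (diagonal _), diagonal_mul_diagonal]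
        rfl
    _ = Z := by
        rw [diagonal_mul_inv_mul_svdLeft_transpose_mul, ← Matrix.mul_assoc,
          svdLeft_mul_transpose_self, Matrix.one_mul]

end SingularValueDecomposition

section Frobenius
variable {m n : ℕ}

theorem frobInner_eq_trace (A Z : Matrix (Fin m) (Fin n) ℝ) : frobInner A Z = trace (A * Zᵀ) := by
  simp only [frobInner, trace, diag, mul_apply, transpose_apply]

theorem frobInner_sub (A Y Z : Matrix (Fin m) (Fin n) ℝ) :
    frobInner A (Y - Z) = frobInner A Y - frobInner A Z := by
  simp only [frobInner, Matrix.sub_apply, mul_sub, Finset.sum_sub_distrib]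

theorem frobInner_mul_diagonal_mul_le {r : Type*} [Fintype r] [DecidableEq r]
    {B : Matrix (Fin m) (Fin n) ℝ} (hB : ‖B‖ ≤ 1) {U : Matrix (Fin m) r ℝ} (hU : ‖U‖ ≤ 1)
    {V : Matrix (Fin n) r ℝ} (hV : ‖V‖ ≤ 1) {σ : r → ℝ} (hσ : 0 ≤ σ) :
    frobInner B (U * diagonal σ * Vᵀ) ≤ ∑ i, σ i := by
  rw [frobInner_eq_trace, transpose_mul, transpose_mul, diagonal_transpose, transpose_transpose,
    ← Matrix.mul_assoc, ← Matrix.mul_assoc, trace_mul_comm, ← Matrix.mul_assoc,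
    ← Matrix.mul_assoc]
  refine trace_mul_diagonal_le_sum ?_ hσ
  calc ‖Uᵀ * B * V‖ ≤ ‖Uᵀ‖ * ‖B‖ * ‖V‖ :=
        (l2_opNorm_mul _ _).trans (mul_le_mul_of_nonneg_right (l2_opNorm_mul _ _) (norm_nonneg _))
    _ ≤ 1 := by
        rw [l2_opNorm_transpose]
        exact mul_le_one₀ (mul_le_one₀ hU (norm_nonneg _) hB) (norm_nonneg _) hV

theorem frobInner_le_nuclearNorm {A : Matrix (Fin m) (Fin n) ℝ} (hA : ‖A‖ ≤ 1)
    (Z : Matrix (Fin m) (Fin n) ℝ) : frobInner A Z ≤ nuclearNorm Z := by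
  conv_lhs => rw [← svdLeft_mul_diagonal_mul_svdRight_transpose Z]
  exact frobInner_mul_diagonal_mul_le hA
    (l2_opNorm_le_one_of_transpose_mul_self_eq_one (svdLeft_transpose_mul_self Z))
    (l2_opNorm_svdRight_le_one Z) (singularValues_nonneg Z)

theorem frobInner_svdLeft_mul_svdRight_transpose (Z : Matrix (Fin m) (Fin n) ℝ) :
    frobInner (svdLeft Z * (svdRight Z)ᵀ) Z = nuclearNorm Z := by
  calc frobInner (svdLeft Z * (svdRight Z)ᵀ) Z
      = trace (diagonal (singularValues Z)⁻¹ * ((svdLeft Z)ᵀ * (Z * Zᵀ) * svdLeft Z)) := by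
        simp only [frobInner_eq_trace, svdRight, transpose_mul, diagonal_transpose,
          transpose_transpose, Matrix.mul_assoc]
        rw [trace_mul_comm]
        simp only [Matrix.mul_assoc]
    _ = ∑ i, singularValues Z i := by
        rw [svdLeft_transpose_mul_mul_svdLeft, diagonal_mul_diagonal, trace_diagonal]
        refine Finset.sum_congr rfl fun i _ => ?_
        simp only [Pi.inv_apply, Pi.pow_apply, sq, ← mul_assoc, inv_mul_mul_self]

theorem exists_l2_opNorm_le_one_frobInner_eq_nuclearNorm (Z : Matrix (Fin m) (Fin n) ℝ) :
    ∃ B : Matrix (Fin m) (Fin n) ℝ, ‖B‖ ≤ 1 ∧ frobInner B Z = nuclearNorm Z := by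
  refine ⟨svdLeft Z * (svdRight Z)ᵀ, ?_, frobInner_svdLeft_mul_svdRight_transpose Z⟩
  calc ‖svdLeft Z * (svdRight Z)ᵀ‖ ≤ ‖svdLeft Z‖ * ‖(svdRight Z)ᵀ‖ := l2_opNorm_mul _ _
    _ ≤ 1 := by
        rw [l2_opNorm_transpose]
        exact mul_le_one₀
          (l2_opNorm_le_one_of_transpose_mul_self_eq_one (svdLeft_transpose_mul_self Z))
          (norm_nonneg _) (l2_opNorm_svdRight_le_one Z)

theorem nuclearNorm_mul_diagonal_mul_le {r : Type*} [Fintype r] [DecidableEq r]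
    {U : Matrix (Fin m) r ℝ} (hU : ‖U‖ ≤ 1) {V : Matrix (Fin n) r ℝ} (hV : ‖V‖ ≤ 1)
    {σ : r → ℝ} (hσ : 0 ≤ σ) : nuclearNorm (U * diagonal σ * Vᵀ) ≤ ∑ i, σ i := by
  obtain ⟨B, hB, hBX⟩ := exists_l2_opNorm_le_one_frobInner_eq_nuclearNorm (U * diagonal σ * Vᵀ)
  exact hBX ▸ frobInner_mul_diagonal_mul_le hB hU hV hσ

theorem frobInner_mul_transpose_add_mul_diagonal_mul {r : Type*} [Fintype r] [DecidableEq r]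
    {U : Matrix (Fin m) r ℝ} {V : Matrix (Fin n) r ℝ} {W : Matrix (Fin m) (Fin n) ℝ}
    (hU : Uᵀ * U = 1) (hV : Vᵀ * V = 1) (hWV : W * V = 0) (σ : r → ℝ) :
    frobInner (U * Vᵀ + W) (U * diagonal σ * Vᵀ) = ∑ i, σ i := by
  have hVσ : Vᵀ * (V * (diagonal σ * Uᵀ)) = diagonal σ * Uᵀ := by
    rw [← Matrix.mul_assoc, hV, Matrix.one_mul]
  have hWσ : W * (V * (diagonal σ * Uᵀ)) = 0 := by rw [← Matrix.mul_assoc, hWV, Matrix.zero_mul]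
  rw [frobInner_eq_trace, transpose_mul, transpose_mul, diagonal_transpose, transpose_transpose,
    Matrix.add_mul, Matrix.mul_assoc, hVσ, hWσ, add_zero, trace_mul_comm,
    Matrix.mul_assoc, hU, Matrix.mul_one, trace_diagonal]

end Frobenius

/-- Subgradient of the nuclear norm: for X = U Diag(σ) Vᵀ (compact SVD, σ > 0) and any W
with Uᵀ W = 0, W V = 0 and spectral norm at most 1, the matrix U Vᵀ + W is a
subgradient of ‖·‖_* at X. -/
theorem nuclearNorm_subgradient {m n r : ℕ}
    (U : Matrix (Fin m) (Fin r) ℝ) (V : Matrix (Fin n) (Fin r) ℝ) (σ : Fin r → ℝ)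
    (hσ : ∀ i, 0 < σ i) (hU : Uᵀ * U = 1) (hV : Vᵀ * V = 1)
    (X : Matrix (Fin m) (Fin n) ℝ) (hX : X = U * Matrix.diagonal σ * Vᵀ)
    (W : Matrix (Fin m) (Fin n) ℝ) (hW1 : Uᵀ * W = 0) (hW2 : W * V = 0)
    (hWnorm : ∀ v : Fin n → ℝ, ∑ i, (W.mulVec v i) ^ 2 ≤ ∑ j, v j ^ 2) :
    ∀ Z : Matrix (Fin m) (Fin n) ℝ,
      nuclearNorm Z ≥ nuclearNorm X + frobInner (U * Vᵀ + W) (Z - X) := by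
  intro Z
  have hA : ‖U * Vᵀ + W‖ ≤ 1 :=
    l2_opNorm_mul_transpose_add_le_one hU hV hW1 hW2 ((l2_opNorm_le_one_iff W).2 hWnorm)
  have hX_le : nuclearNorm X ≤ ∑ i, σ i := hX ▸ nuclearNorm_mul_diagonal_mul_le
    (l2_opNorm_le_one_of_transpose_mul_self_eq_one hU)
    (l2_opNorm_le_one_of_transpose_mul_self_eq_one hV) fun i => (hσ i).le
  have hAX : frobInner (U * Vᵀ + W) X = ∑ i, σ i :=
    hX ▸ frobInner_mul_transpose_add_mul_diagonal_mul hU hV hW2 σ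
  have hAZ := frobInner_le_nuclearNorm hA Z
  rw [frobInner_sub, hAX]
  linarith
end
end

section
/- Suppose b = 𝒜X_r + e where X_r has rank at most r, and 𝒜 satisfies the RIP with δ_{3r}(𝒜) < 1/√32. Then the IHT iterates X^k (with Y^{k+1} = X^k − 𝒜*(𝒜X^k − b) and X^{k+1} = R_r(Y^{k+1})) satisfy ‖X_r − X^k‖_F ≤ 2^{-k} ‖X_r − X^0‖_F + 4.34 ‖e‖₂ for every k ≥ 0. -/
/-!
Put `d = X^{k+1} - X_r` and `E = X^k - X_r`. Since `X_r` competes in the best rank-`r`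
approximation of `Y^{k+1}`, `‖d‖² ≤ 2⟪d, Y^{k+1} - X_r⟫ = 2(⟪d, E⟫ - ⟪𝒜d, 𝒜E⟫) + 2⟪𝒜d, e⟫`.
Both `d` and `E` lie in the span of `X_r, X^k, X^{k+1}`, whose elements have rank at most `3r`,
so `𝒜` is a `δ`-isometry there: by polarization the first bracket is at most `δ‖d‖‖E‖`, and the
second term is at most `√(1 + δ)‖d‖‖e‖`. Hence `‖d‖ ≤ 2δ‖E‖ + 2√(1 + δ)‖e‖` with `2δ < 1/2`,
and unrolling this recursion gives the bound, with `4√(1 + δ) < 4.34`.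
-/

open scoped BigOperators
open Matrix

noncomputable section

/-- `X` is a best rank-`r` approximation (in Frobenius norm) of `Y`. -/
def IsBestRankApprox {m n : ℕ} (r : ℕ) (Y X : Matrix (Fin m) (Fin n) ℝ) : Prop :=
  X.rank ≤ r ∧ ∀ Z : Matrix (Fin m) (Fin n) ℝ, Z.rank ≤ r → frobNorm (X - Y) ≤ frobNorm (Z - Y)

open scoped RealInnerProductSpace

section InnerProductSpace

variable {V W : Type*} [NormedAddCommGroup V] [InnerProductSpace ℝ V]
  [NormedAddCommGroup W] [InnerProductSpace ℝ W] {T : V →ₗ[ℝ] W} {T' : W →ₗ[ℝ] V} {δ : ℝ}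

def RestrictedIsometryOn (T : V →ₗ[ℝ] W) (δ : ℝ) (s : Set V) : Prop :=
  ∀ x ∈ s, (1 - δ) * ‖x‖ ^ 2 ≤ ‖T x‖ ^ 2 ∧ ‖T x‖ ^ 2 ≤ (1 + δ) * ‖x‖ ^ 2

namespace RestrictedIsometryOn

theorem mono {s t : Set V} (hT : RestrictedIsometryOn T δ t) (hst : s ⊆ t) :
    RestrictedIsometryOn T δ s :=
  fun x hx => hT x (hst hx)

theorem norm_apply_le {s : Set V} (hT : RestrictedIsometryOn T δ s) {x : V} (hx : x ∈ s) :
    ‖T x‖ ≤ √(1 + δ) * ‖x‖ := by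
  rw [← Real.sqrt_sq (norm_nonneg (T x)), ← Real.sqrt_sq (norm_nonneg x),
    ← Real.sqrt_mul' _ (sq_nonneg _)]
  exact Real.sqrt_le_sqrt (hT x hx).2

variable {S : Submodule ℝ V}

theorem abs_inner_sub_inner_le_half (hT : RestrictedIsometryOn T δ S) {x y : V}
    (hx : x ∈ S) (hy : y ∈ S) :
    |⟪x, y⟫ - ⟪T x, T y⟫| ≤ δ / 2 * (‖x‖ ^ 2 + ‖y‖ ^ 2) := by
  obtain ⟨hl_add, hu_add⟩ := hT (x + y) (S.add_mem hx hy)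
  obtain ⟨hl_sub, hu_sub⟩ := hT (x - y) (S.sub_mem hx hy)
  rw [map_add, norm_add_sq_real, norm_add_sq_real] at hl_add hu_add
  rw [map_sub, norm_sub_sq_real, norm_sub_sq_real] at hl_sub hu_sub
  rw [abs_le]
  constructor <;> linarith

theorem abs_inner_sub_inner_le (hT : RestrictedIsometryOn T δ S) {x y : V}
    (hx : x ∈ S) (hy : y ∈ S) :
    |⟪x, y⟫ - ⟪T x, T y⟫| ≤ δ * ‖x‖ * ‖y‖ := by
  rcases eq_or_ne x 0 with rfl | hx0
  · simp
  rcases eq_or_ne y 0 with rfl | hy0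
  · simp
  have hs : 0 < ‖x‖ * ‖y‖ := mul_pos (norm_pos_iff.2 hx0) (norm_pos_iff.2 hy0)
  -- rescale to `‖y‖ • x` and `‖x‖ • y`, both of norm `‖x‖‖y‖`, where `(a² + b²) / 2 = ab`
  have key := hT.abs_inner_sub_inner_le_half (S.smul_mem ‖y‖ hx) (S.smul_mem ‖x‖ hy)
  have hinner : ⟪‖y‖ • x, ‖x‖ • y⟫ - ⟪T (‖y‖ • x), T (‖x‖ • y)⟫
      = (‖x‖ * ‖y‖) * (⟪x, y⟫ - ⟪T x, T y⟫) := by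
    simp only [map_smul, real_inner_smul_left, real_inner_smul_right]
    ring
  rw [hinner, abs_mul, abs_of_pos hs, norm_smul, norm_smul, norm_norm, norm_norm] at key
  refine le_of_mul_le_mul_left ?_ hs
  linarith

end RestrictedIsometryOn

theorem norm_sub_sq_le_two_inner_of_norm_sub_le {p q y : V} (h : ‖p - y‖ ≤ ‖q - y‖) :
    ‖p - q‖ ^ 2 ≤ 2 * ⟪p - q, y - q⟫ := by
  have hsq : ‖(p - q) - (y - q)‖ ^ 2 ≤ ‖y - q‖ ^ 2 := by
    rw [sub_sub_sub_cancel_right, norm_sub_rev y q]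
    gcongr
  rw [norm_sub_sq_real] at hsq
  linarith

theorem RestrictedIsometryOn.norm_sub_le_of_iht_step (hadj : ∀ x c, ⟪T x, c⟫ = ⟪x, T' c⟫)
    {S : Submodule ℝ V} (hT : RestrictedIsometryOn T δ S) (hδ : 0 ≤ δ) {x x' xr : V} (e : W)
    (hx : x - xr ∈ S) (hx' : x' - xr ∈ S)
    (hbest : ‖x' - (x - T' (T x - (T xr + e)))‖ ≤ ‖xr - (x - T' (T x - (T xr + e)))‖) :
    ‖x' - xr‖ ≤ 2 * δ * ‖x - xr‖ + 2 * √(1 + δ) * ‖e‖ := by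
  set d := x' - xr
  set E := x - xr
  have hgrad : x - T' (T x - (T xr + e)) - xr = E - T' (T E - e) := by
    simp only [E, map_sub, map_add]
    abel
  have hsq : ‖d‖ ^ 2 ≤ 2 * ⟪d, E - T' (T E - e)⟫ :=
    hgrad ▸ norm_sub_sq_le_two_inner_of_norm_sub_le hbest
  have hsplit : ⟪d, E - T' (T E - e)⟫ = (⟪d, E⟫ - ⟪T d, T E⟫) + ⟪T d, e⟫ := by
    rw [inner_sub_right d E, ← hadj, inner_sub_right (T d) (T E) e]
    ring
  have hcross := (abs_le.1 (hT.abs_inner_sub_inner_le hx' hx)).2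
  have hnoise : ⟪T d, e⟫ ≤ √(1 + δ) * ‖d‖ * ‖e‖ := (real_inner_le_norm _ _).trans
    (mul_le_mul_of_nonneg_right (hT.norm_apply_le hx') (norm_nonneg e))
  have hd : ‖d‖ ^ 2 ≤ ‖d‖ * (2 * δ * ‖E‖ + 2 * √(1 + δ) * ‖e‖) := by nlinarith
  have hrhs : 0 ≤ 2 * δ * ‖E‖ + 2 * √(1 + δ) * ‖e‖ := by positivity
  nlinarith [norm_nonneg d]

theorem le_pow_mul_add_of_le_mul_add {a : ℕ → ℝ} {q c : ℝ} (hq₀ : 0 ≤ q) (hq₁ : q < 1)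
    (hc : 0 ≤ c) (h : ∀ k, a (k + 1) ≤ q * a k + c) (k : ℕ) :
    a k ≤ q ^ k * a 0 + c / (1 - q) := by
  induction k with
  | zero => simpa using div_nonneg hc (sub_nonneg.2 hq₁.le)
  | succ k ih =>
    have hq : 1 - q ≠ 0 := (sub_pos.2 hq₁).ne'
    calc a (k + 1) ≤ q * (q ^ k * a 0 + c / (1 - q)) + c := by nlinarith [h k]
      _ = q ^ (k + 1) * a 0 + c / (1 - q) := by
        field_simp
        ring

theorem norm_sub_iht_iterate_le (hadj : ∀ x c, ⟪T x, c⟫ = ⟪x, T' c⟫) {L : Set V}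
    (hRIP : ∀ u ∈ L, ∀ v ∈ L, ∀ w ∈ L, RestrictedIsometryOn T δ (Submodule.span ℝ {u, v, w}))
    (hδ₀ : 0 ≤ δ) (hδ : δ ≤ 1 / 4) {xr : V} (hxr : xr ∈ L) (e : W) {x : ℕ → V}
    (hx : ∀ k, x k ∈ L)
    (hbest : ∀ k, ‖x (k + 1) - (x k - T' (T (x k) - (T xr + e)))‖
      ≤ ‖xr - (x k - T' (T (x k) - (T xr + e)))‖) (k : ℕ) :
    ‖xr - x k‖ ≤ (1 / 2) ^ k * ‖xr - x 0‖ + 4 * √(1 + δ) * ‖e‖ := by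
  have hstep : ∀ k, ‖xr - x (k + 1)‖ ≤ 1 / 2 * ‖xr - x k‖ + 2 * √(1 + δ) * ‖e‖ := by
    intro k
    set S := Submodule.span ℝ {x k, x (k + 1), xr}
    have hmem : ∀ z ∈ ({x k, x (k + 1), xr} : Set V), z - xr ∈ S :=
      fun z hz => sub_mem (Submodule.subset_span hz) (Submodule.subset_span (by simp))
    have h := (hRIP _ (hx k) _ (hx (k + 1)) _ hxr).norm_sub_le_of_iht_step hadj hδ₀ e
      (hmem _ (by simp)) (hmem _ (by simp)) (hbest k)
    rw [norm_sub_rev xr, norm_sub_rev xr]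
    nlinarith [norm_nonneg (x k - xr)]
  have h := le_pow_mul_add_of_le_mul_add (a := fun k => ‖xr - x k‖) (by norm_num) (by norm_num)
    (by positivity) hstep k
  convert h using 2
  ring

end InnerProductSpace

namespace Matrix

variable {m n K : Type*} [Fintype n] [Field K]

theorem rank_smul_le (c : K) (A : Matrix m n K) : (c • A).rank ≤ A.rank := by
  refine Submodule.finrank_mono ?_
  rintro x ⟨v, rfl⟩
  exact ⟨c • v, by simp⟩

theorem rank_add_le (A B : Matrix m n K) : (A + B).rank ≤ A.rank + B.rank := by
  refine (Submodule.finrank_mono ?_).trans (Submodule.finrank_add_le_finrank_add_finrank _ _)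
  rw [mulVecLin_add]
  rintro x ⟨v, rfl⟩
  exact Submodule.mem_sup.2 ⟨_, ⟨v, rfl⟩, _, ⟨v, rfl⟩, rfl⟩

theorem rank_le_of_mem_span_triple {P Q R Z : Matrix m n K}
    (hZ : Z ∈ Submodule.span K {P, Q, R}) : Z.rank ≤ P.rank + Q.rank + R.rank := by
  obtain ⟨a, b, c, rfl⟩ := Submodule.mem_span_triple.1 hZ
  calc (a • P + b • Q + c • R).rank ≤ (a • P).rank + (b • Q).rank + (c • R).rank :=
        (rank_add_le _ _).trans (Nat.add_le_add_right (rank_add_le _ _) _)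
    _ ≤ P.rank + Q.rank + R.rank := by gcongr <;> exact rank_smul_le _ _

end Matrix

section Frobenius

variable {m n : ℕ}

abbrev frobInnerCore : InnerProductSpace.Core ℝ (Matrix (Fin m) (Fin n) ℝ) where
  inner := frobInner
  conj_inner_symm X Y := by simp [frobInner, mul_comm]
  re_inner_nonneg X := show 0 ≤ frobInner X X from
    Finset.sum_nonneg fun i _ => Finset.sum_nonneg fun j _ => mul_self_nonneg _
  add_left X Y Z := by simp [frobInner, add_mul, Finset.sum_add_distrib]
  smul_left X Y r := by simp [frobInner, Finset.mul_sum, mul_assoc]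
  definite X h := by
    ext i j
    have hrow := (Finset.sum_eq_zero_iff_of_nonneg fun i _ => Finset.sum_nonneg fun j _ =>
      mul_self_nonneg (X i j)).1 h i (Finset.mem_univ _)
    exact mul_self_eq_zero.1 ((Finset.sum_eq_zero_iff_of_nonneg fun j _ =>
      mul_self_nonneg (X i j)).1 hrow j (Finset.mem_univ _))

-- With these instances `‖X‖` and `⟪X, Y⟫` unfold to `frobNorm X` and `frobInner X Y`.
abbrev frobNormedAddCommGroup : NormedAddCommGroup (Matrix (Fin m) (Fin n) ℝ) :=
  frobInnerCore.toNormedAddCommGroup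

attribute [local instance] frobNormedAddCommGroup

abbrev frobInnerProductSpace : InnerProductSpace ℝ (Matrix (Fin m) (Fin n) ℝ) :=
  InnerProductSpace.ofCore frobInnerCore.toCore

end Frobenius

attribute [local instance] frobNormedAddCommGroup frobInnerProductSpace

theorem norm_toLp_eq_vecNorm {p : ℕ} (b : Fin p → ℝ) : ‖WithLp.toLp 2 b‖ = vecNorm b := by
  simp [EuclideanSpace.norm_eq, vecNorm]

theorem one_div_sqrt_32_lt : 1 / √32 < (0.1768 : ℝ) := by
  rw [div_lt_iff₀ (by positivity)]
  nlinarith [Real.sq_sqrt (show (0 : ℝ) ≤ 32 by norm_num), Real.sqrt_nonneg 32]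

theorem four_mul_sqrt_one_add_le {δ : ℝ} (hδ : δ < 1 / √32) : 4 * √(1 + δ) ≤ 4.34 := by
  have h : √(1 + δ) ≤ 1.085 := Real.sqrt_le_iff.2 ⟨by norm_num, by linarith [one_div_sqrt_32_lt]⟩
  linarith

/-- Theorem 4.2: geometric convergence of IHT for exact rank-r data. -/
theorem iht_convergence {m n p r : ℕ}
    (A : Matrix (Fin m) (Fin n) ℝ →ₗ[ℝ] (Fin p → ℝ))
    (Aadj : (Fin p → ℝ) →ₗ[ℝ] Matrix (Fin m) (Fin n) ℝ)
    (hadj : ∀ (X : Matrix (Fin m) (Fin n) ℝ) (c : Fin p → ℝ),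
      ∑ i, A X i * c i = frobInner (Aadj c) X)
    (δ : ℝ) (hδ : 0 ≤ δ) (hδsmall : δ < 1 / Real.sqrt 32)
    (hRIP : ∀ X : Matrix (Fin m) (Fin n) ℝ, X.rank ≤ 3 * r →
      (1 - δ) * frobNorm X ^ 2 ≤ vecNorm (A X) ^ 2 ∧
        vecNorm (A X) ^ 2 ≤ (1 + δ) * frobNorm X ^ 2)
    (Xr : Matrix (Fin m) (Fin n) ℝ) (hXr : Xr.rank ≤ r)
    (e : Fin p → ℝ) (b : Fin p → ℝ) (hb : b = A Xr + e)
    (X : ℕ → Matrix (Fin m) (Fin n) ℝ) (Y : ℕ → Matrix (Fin m) (Fin n) ℝ)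
    (hX0 : (X 0).rank ≤ r)
    (hY : ∀ k, Y (k + 1) = X k - Aadj (A (X k) - b))
    (hXstep : ∀ k, IsBestRankApprox r (Y (k + 1)) (X (k + 1))) :
    ∀ k, frobNorm (Xr - X k) ≤
      (1 / 2 : ℝ) ^ k * frobNorm (Xr - X 0) + 4.34 * vecNorm e := by
  intro k
  let T := (WithLp.linearEquiv 2 ℝ (Fin p → ℝ)).symm.toLinearMap ∘ₗ A
  let T' := Aadj ∘ₗ (WithLp.linearEquiv 2 ℝ (Fin p → ℝ)).toLinearMap
  have hadjT : ∀ X c, ⟪T X, c⟫ = ⟪X, T' c⟫ := fun X c => calc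
    ⟪T X, c⟫ = ∑ i, A X i * c.ofLp i := by
      simp [T, EuclideanSpace.inner_eq_star_dotProduct, dotProduct, mul_comm]
    _ = ⟪T' c, X⟫ := hadj X c.ofLp
    _ = ⟪X, T' c⟫ := real_inner_comm _ _
  have hRIPT : RestrictedIsometryOn T δ {Z | Z.rank ≤ 3 * r} := fun Z hZ => by
    rw [show T Z = WithLp.toLp 2 (A Z) from rfl, norm_toLp_eq_vecNorm]
    exact hRIP Z hZ
  have hX : ∀ k, X k ∈ {Z | Z.rank ≤ r}
    | 0 => hX0
    | k + 1 => (hXstep k).1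
  have hbest : ∀ k, ‖X (k + 1) - (X k - T' (T (X k) - (T Xr + WithLp.toLp 2 e)))‖
      ≤ ‖Xr - (X k - T' (T (X k) - (T Xr + WithLp.toLp 2 e)))‖ := fun k => by
    have h := (hXstep k).2 Xr hXr
    rwa [hY, hb] at h
  have h := norm_sub_iht_iterate_le hadjT
    (fun U (hU : U.rank ≤ r) V (hV : V.rank ≤ r) W (hW : W.rank ≤ r) =>
      hRIPT.mono fun Z hZ => (rank_le_of_mem_span_triple hZ).trans (by omega))
    hδ (by linarith [one_div_sqrt_32_lt]) hXr (WithLp.toLp 2 e) hX hbest k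
  rw [norm_toLp_eq_vecNorm] at h
  exact h.trans (add_le_add le_rfl
    (mul_le_mul_of_nonneg_right (four_mul_sqrt_one_add_le hδsmall) (Real.sqrt_nonneg _)))
end
end
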